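/- arXiv:0807.1065 — 4 statements merged into one kernel-verified Lean document; each statement's English description precedes it below -/
import Mathlib

section
/- Let μ ∈ M and let φ : ℝ^D → ℝ^D be a smooth diffeomorphism equal to the identity outside a compact set. For a vector field X define φ_*X := (∇φ·X)∘φ⁻¹. Then ‖φ_*X‖_{φ_#μ} ≤ C_φ‖X‖_μ, where C_φ is the supremum norm of ∇φ, so φ_* extends to a unique continuous linear map φ_* : L²(μ) → L²(φ_#μ); moreover φ_* maps Ker(div_μ) into Ker(div_{φ_#μ}). -/
open MeasureTheory Filter Set
open scoped RealInnerProductSpace Topology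

noncomputable section

abbrev Euc (D : ℕ) := EuclideanSpace ℝ (Fin D)

variable {D : ℕ}

/-- The Wasserstein space `M`: Borel probability measures with finite second moment. -/
def InM (μ : Measure (Euc D)) : Prop :=
  IsProbabilityMeasure μ ∧ Integrable (fun x => ‖x‖ ^ 2) μ

/-- `γ` is a coupling of `μ` and `ν`. -/
def IsCoupling (μ ν : Measure (Euc D)) (γ : Measure (Euc D × Euc D)) : Prop :=
  IsProbabilityMeasure γ ∧ γ.map Prod.fst = μ ∧ γ.map Prod.snd = ν

/-- Transport cost of a coupling. -/
def Wcost (γ : Measure (Euc D × Euc D)) : ℝ :=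
  ∫ p, ‖p.1 - p.2‖ ^ 2 ∂γ

/-- Squared Wasserstein distance. -/
def W2sq (μ ν : Measure (Euc D)) : ℝ :=
  sInf (Wcost '' {γ | IsCoupling μ ν γ})

/-- Wasserstein distance. -/
def W2 (μ ν : Measure (Euc D)) : ℝ := Real.sqrt (W2sq μ ν)

/-- Optimal couplings `Γ_o(μ,ν)`. -/
def IsOptCoupling (μ ν : Measure (Euc D)) (γ : Measure (Euc D × Euc D)) : Prop :=
  IsCoupling μ ν γ ∧ Wcost γ = W2sq μ ν

/-- Membership in `L²(μ)` for vector fields. -/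
def MemL2 (μ : Measure (Euc D)) (X : Euc D → Euc D) : Prop :=
  AEStronglyMeasurable X μ ∧ Integrable (fun x => ‖X x‖ ^ 2) μ

/-- The `L²(μ)` norm of a vector field. -/
def L2norm (μ : Measure (Euc D)) (X : Euc D → Euc D) : ℝ :=
  Real.sqrt (∫ x, ‖X x‖ ^ 2 ∂μ)

/-- Smooth compactly supported functions. -/
def Cinfc (f : Euc D → ℝ) : Prop :=
  ContDiff ℝ (⊤ : ℕ∞) f ∧ HasCompactSupport f

/-- Smooth compactly supported vector fields. -/
def CinfcVF (X : Euc D → Euc D) : Prop :=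
  ContDiff ℝ (⊤ : ℕ∞) X ∧ HasCompactSupport X

/-- `X ∈ Ker(div_μ)`. -/
def InKerDiv (μ : Measure (Euc D)) (X : Euc D → Euc D) : Prop :=
  MemL2 μ X ∧ ∀ f : Euc D → ℝ, Cinfc f → ∫ x, fderiv ℝ f x (X x) ∂μ = 0

/-- `X ∈ T_μM`, the closure of gradients of smooth compactly supported functions in `L²(μ)`. -/
def InTangent (μ : Measure (Euc D)) (X : Euc D → Euc D) : Prop :=
  MemL2 μ X ∧ ∀ ε > 0, ∃ f : Euc D → ℝ, Cinfc f ∧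
    L2norm μ (fun x => X x - gradient f x) < ε

/-- `F` is differentiable at `μ` with Wasserstein gradient `G = ∇_μF ∈ T_μM`. -/
def HasWGradient (F : Measure (Euc D) → ℝ) (μ : Measure (Euc D)) (G : Euc D → Euc D) : Prop :=
  InTangent μ G ∧
  ∀ ε > 0, ∃ δ > 0, ∀ ν : Measure (Euc D), InM ν → W2 μ ν < δ →
    ∀ γ : Measure (Euc D × Euc D), IsOptCoupling μ ν γ →
      |F ν - F μ - (∫ p, ⟪G p.1, p.2 - p.1⟫ ∂γ)| ≤ ε * W2 μ ν

/-- The curve `σ` belongs to `AC₂(a,b;M)`. -/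
def IsAC2 (a b : ℝ) (σ : ℝ → Measure (Euc D)) : Prop :=
  (∀ t ∈ Set.Ioo a b, InM (σ t)) ∧
  ∃ β : ℝ → ℝ, Integrable (fun τ => β τ ^ 2) (volume.restrict (Set.Ioo a b)) ∧
    ∀ s t : ℝ, a < s → s < t → t < b → W2 (σ s) (σ t) ≤ ∫ τ in s..t, β τ

/-- `v` is a velocity for the curve `σ` on `(a,b)`. -/
def IsVelocity (a b : ℝ) (σ : ℝ → Measure (Euc D)) (v : ℝ → Euc D → Euc D) : Prop :=
  Measurable (Function.uncurry v) ∧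
  (∀ᵐ t ∂(volume.restrict (Set.Ioo a b)), MemL2 (σ t) (v t)) ∧
  ∀ φ : ℝ → Euc D → ℝ,
    ContDiff ℝ (⊤ : ℕ∞) (Function.uncurry φ) →
    HasCompactSupport (Function.uncurry φ) →
    tsupport (Function.uncurry φ) ⊆ Set.Ioo a b ×ˢ Set.univ →
    ∫ t in Set.Ioo a b, ∫ x, (deriv (fun s => φ s x) t + fderiv ℝ (φ t) x (v t x)) ∂(σ t) = 0

/-- `v` is the velocity of minimal norm for `σ`: a velocity with `v_t ∈ T_{σ_t}M` a.e. -/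
def IsMinimalVelocity (a b : ℝ) (σ : ℝ → Measure (Euc D)) (v : ℝ → Euc D → Euc D) : Prop :=
  IsVelocity a b σ v ∧ ∀ᵐ t ∂(volume.restrict (Set.Ioo a b)), InTangent (σ t) (v t)

/-- Evaluation of the pseudo 1-form with Riesz representatives `A` at `μ` on `X`. -/
def pfEval (A : Measure (Euc D) → Euc D → Euc D) (μ : Measure (Euc D))
    (X : Euc D → Euc D) : ℝ :=
  ∫ x, ⟪A μ x, X x⟫ ∂μ

/-- A regular pseudo 1-form on the Wasserstein space, given by its Riesz representatives `A`,
matrix fields `B`, constant `c` and moduli `O`. -/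
structure RegularPseudoForm (D : ℕ) where
  A : Measure (Euc D) → Euc D → Euc D
  B : Measure (Euc D) → Euc D → (Euc D →L[ℝ] Euc D)
  c : ℝ
  O : Measure (Euc D) → ℝ → ℝ
  c_pos : 0 < c
  A_mem : ∀ μ : Measure (Euc D), InM μ → MemL2 μ (A μ)
  B_meas : ∀ μ : Measure (Euc D), InM μ → AEStronglyMeasurable (B μ) μ
  B_bdd : ∀ μ : Measure (Euc D), InM μ → ∃ K : ℝ, ∀ᵐ x ∂μ, ‖B μ x‖ ≤ K
  B_l2 : ∀ μ : Measure (Euc D), InM μ →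
    Integrable (fun x => ‖B μ x‖ ^ 2) μ ∧ Real.sqrt (∫ x, ‖B μ x‖ ^ 2 ∂μ) ≤ c
  O_cont : ∀ μ : Measure (Euc D), Continuous (O μ)
  O_zero : ∀ μ : Measure (Euc D), O μ 0 = 0
  regular : ∀ μ ν : Measure (Euc D), InM μ → InM ν →
    ∀ γ : Measure (Euc D × Euc D), IsOptCoupling μ ν γ →
      ∫ p, ‖A ν p.2 - A μ p.1 - B μ p.1 (p.2 - p.1)‖ ^ 2 ∂γ ≤
        W2 μ ν ^ 2 * (min (O μ (W2 μ ν)) c) ^ 2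

/- Since `ψ ∘ φ = id`, pulling back along `φ` turns integrals against `φ_#μ` of functions of the
form `g ∘ ψ` into integrals of `g` against `μ`, and `φ_* X ∘ φ = ∇φ · X`. The `L²` estimate is then
the pointwise bound `‖∇φ · X‖ ≤ C_φ ‖X‖`, where `C_φ` is finite because `∇φ = id` off a compact
set. For the divergence, the chain rule gives `df (φ_* X) ∘ φ = d(f ∘ φ) X`, and `f ∘ φ` is again
a smooth compactly supported test function. -/

lemma MeasureTheory.AEStronglyMeasurable.clm_apply {α 𝕜 E F : Type*} [MeasurableSpace α]
    {μ : Measure α} [NontriviallyNormedField 𝕜] [NormedAddCommGroup E] [NormedSpace 𝕜 E]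
    [NormedAddCommGroup F] [NormedSpace 𝕜 F] {A : α → E →L[𝕜] F} {X : α → E}
    (hA : AEStronglyMeasurable A μ) (hX : AEStronglyMeasurable X μ) :
    AEStronglyMeasurable (fun x => A x (X x)) μ :=
  isBoundedBilinearMap_apply.continuous.comp_aestronglyMeasurable (hA.prodMk hX)

section LeftInverse

variable {α β : Type*} [MeasurableSpace α] [MeasurableSpace β] {μ : Measure α}
  {φ : α → β} {ψ : β → α}

lemma map_map_eq_self_of_leftInverse (hφ : Measurable φ) (hψ : Measurable ψ)
    (h : Function.LeftInverse ψ φ) : (μ.map φ).map ψ = μ := by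
  rw [Measure.map_map hψ hφ, h.comp_eq_id, Measure.map_id]

variable {F : Type*} [NormedAddCommGroup F]

lemma MeasureTheory.AEStronglyMeasurable.comp_leftInverse_map {g : α → F}
    (hg : AEStronglyMeasurable g μ) (hφ : Measurable φ) (hψ : Measurable ψ)
    (h : Function.LeftInverse ψ φ) :
    AEStronglyMeasurable (g ∘ ψ) (μ.map φ) := by
  rw [← map_map_eq_self_of_leftInverse (μ := μ) hφ hψ h] at hg
  exact hg.comp_aemeasurable hψ.aemeasurable

lemma integrable_map_comp_leftInverse {g : α → F} (hg : Integrable g μ)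
    (hφ : Measurable φ) (hψ : Measurable ψ) (h : Function.LeftInverse ψ φ) :
    Integrable (g ∘ ψ) (μ.map φ) := by
  rw [integrable_map_measure (hg.1.comp_leftInverse_map hφ hψ h) hφ.aemeasurable,
    Function.comp_assoc, h.comp_eq_id, Function.comp_id]
  exact hg

variable [NormedSpace ℝ F]

lemma integral_map_comp_leftInverse {g : α → F} (hg : AEStronglyMeasurable g μ)
    (hφ : Measurable φ) (hψ : Measurable ψ) (h : Function.LeftInverse ψ φ) :
    ∫ y, g (ψ y) ∂(μ.map φ) = ∫ x, g x ∂μ := by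
  refine (integral_map hφ.aemeasurable (hg.comp_leftInverse_map hφ hψ h)).trans ?_
  simp only [Function.comp_apply, h _]

end LeftInverse

section EqIdOffCompact

variable {E : Type*} [NormedAddCommGroup E] {φ : E → E} {K : Set E}

lemma bddAbove_range_norm_fderiv_of_eq_id_off_compact [NormedSpace ℝ E]
    (hφ : Continuous (fderiv ℝ φ)) (hK : IsCompact K) (hid : ∀ x ∉ K, φ x = x) :
    BddAbove (range fun x => ‖fderiv ℝ φ x‖) := by
  obtain ⟨M, hM⟩ := (hK.image_of_continuousOn hφ.norm.continuousOn).bddAbove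
  refine ⟨max M 1, ?_⟩
  rintro _ ⟨x, rfl⟩
  by_cases hx : x ∈ K
  · exact (hM ⟨x, hx, rfl⟩).trans (le_max_left _ _)
  · have hφx : φ =ᶠ[𝓝 x] id :=
      Filter.mem_of_superset (hK.isClosed.isOpen_compl.mem_nhds hx) fun y hy => hid y hy
    simp only [hφx.fderiv_eq, fderiv_id]
    exact ContinuousLinearMap.norm_id_le.trans (le_max_right _ _)

lemma HasCompactSupport.comp_of_eq_id_off_compact {G : Type*} [Zero G] {f : E → G}
    (hf : HasCompactSupport f) (hK : IsCompact K) (hid : ∀ x ∉ K, φ x = x) :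
    HasCompactSupport (f ∘ φ) := by
  refine HasCompactSupport.intro (hK.union hf) fun x hx => ?_
  rw [mem_union, not_or] at hx
  rw [Function.comp_apply, hid x hx.1]
  exact image_eq_zero_of_notMem_tsupport hx.2

lemma norm_fderiv_le_iSup_of_eq_id_off_compact [NormedSpace ℝ E] (hφ : ContDiff ℝ 1 φ)
    (hK : IsCompact K) (hid : ∀ x ∉ K, φ x = x) (x : E) :
    ‖fderiv ℝ φ x‖ ≤ ⨆ y, ‖fderiv ℝ φ y‖ :=
  le_ciSup (bddAbove_range_norm_fderiv_of_eq_id_off_compact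
    (hφ.continuous_fderiv one_ne_zero) hK hid) x

end EqIdOffCompact

section VectorFields

variable {μ : Measure (Euc D)} {φ ψ X : Euc D → Euc D}

lemma MemL2.comp_leftInverse_map (hX : MemL2 μ X)
    (hφ : Measurable φ) (hψ : Measurable ψ) (h : Function.LeftInverse ψ φ) :
    MemL2 (μ.map φ) (X ∘ ψ) :=
  ⟨hX.1.comp_leftInverse_map hφ hψ h, integrable_map_comp_leftInverse hX.2 hφ hψ h⟩

lemma L2norm_map_comp_leftInverse (hX : AEStronglyMeasurable X μ) (hφ : Measurable φ)
    (hψ : Measurable ψ) (h : Function.LeftInverse ψ φ) : L2norm (μ.map φ) (X ∘ ψ) = L2norm μ X :=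
  congrArg Real.sqrt <|
    integral_map_comp_leftInverse (g := fun x => ‖X x‖ ^ 2) (hX.norm.pow 2) hφ hψ h

variable {A : Euc D → Euc D →L[ℝ] Euc D} {C : ℝ}

lemma norm_sq_clm_apply_le (hA : ∀ x, ‖A x‖ ≤ C) (x : Euc D) :
    ‖A x (X x)‖ ^ 2 ≤ C ^ 2 * ‖X x‖ ^ 2 := by
  rw [← mul_pow]
  exact pow_le_pow_left₀ (norm_nonneg _)
    ((A x).le_of_opNorm_le (hA x) (X x)) 2

lemma MemL2.clm_apply (hX : MemL2 μ X) (hAm : AEStronglyMeasurable A μ)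
    (hA : ∀ x, ‖A x‖ ≤ C) : MemL2 μ (fun x => A x (X x)) := by
  have hm : AEStronglyMeasurable (fun x => A x (X x)) μ := hAm.clm_apply hX.1
  refine ⟨hm, (hX.2.const_mul (C ^ 2)).mono' (hm.norm.pow 2) (ae_of_all _ fun x => ?_)⟩
  rw [Real.norm_of_nonneg (by positivity)]
  exact norm_sq_clm_apply_le hA x

lemma L2norm_clm_apply_le (hX : MemL2 μ X) (hAm : AEStronglyMeasurable A μ)
    (hA : ∀ x, ‖A x‖ ≤ C) : L2norm μ (fun x => A x (X x)) ≤ C * L2norm μ X := by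
  have hC : 0 ≤ C := (norm_nonneg _).trans (hA 0)
  calc L2norm μ (fun x => A x (X x))
      ≤ Real.sqrt (C ^ 2 * ∫ x, ‖X x‖ ^ 2 ∂μ) := by
        rw [← integral_const_mul]
        exact Real.sqrt_le_sqrt (integral_mono (hX.clm_apply hAm hA).2 (hX.2.const_mul _)
          (norm_sq_clm_apply_le hA))
    _ = C * L2norm μ X := by rw [Real.sqrt_mul (sq_nonneg _), Real.sqrt_sq hC, L2norm]

end VectorFields

/-- `φ_* X`, with `ψ` in the role of `φ⁻¹`. -/
def pushforwardField (φ ψ X : Euc D → Euc D) : Euc D → Euc D :=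
  (fun x => fderiv ℝ φ x (X x)) ∘ ψ

section PushforwardField

variable {μ : Measure (Euc D)} {φ ψ X : Euc D → Euc D} {K : Set (Euc D)}

lemma MemL2.pushforwardField (hX : MemL2 μ X) (hφ : ContDiff ℝ 1 φ) (hψ : Measurable ψ)
    (h : Function.LeftInverse ψ φ) (hK : IsCompact K) (hid : ∀ x ∉ K, φ x = x) :
    MemL2 (μ.map φ) (pushforwardField φ ψ X) :=
  (hX.clm_apply (hφ.continuous_fderiv one_ne_zero).aestronglyMeasurable
    (norm_fderiv_le_iSup_of_eq_id_off_compact hφ hK hid)).comp_leftInverse_map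
    hφ.continuous.measurable hψ h

lemma L2norm_pushforwardField_le (hX : MemL2 μ X) (hφ : ContDiff ℝ 1 φ) (hψ : Measurable ψ)
    (h : Function.LeftInverse ψ φ) (hK : IsCompact K) (hid : ∀ x ∉ K, φ x = x) :
    L2norm (μ.map φ) (pushforwardField φ ψ X) ≤ (⨆ x, ‖fderiv ℝ φ x‖) * L2norm μ X := by
  have hAm := (hφ.continuous_fderiv one_ne_zero).aestronglyMeasurable (μ := μ)
  rw [pushforwardField,
    L2norm_map_comp_leftInverse (hAm.clm_apply hX.1) hφ.continuous.measurable hψ h]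
  exact L2norm_clm_apply_le hX hAm (norm_fderiv_le_iSup_of_eq_id_off_compact hφ hK hid)

lemma integral_fderiv_apply_pushforwardField (hX : AEStronglyMeasurable X μ)
    (hφ : ContDiff ℝ 1 φ) (hψ : Measurable ψ) (h : Function.LeftInverse ψ φ)
    {f : Euc D → ℝ} (hf : ContDiff ℝ 1 f) :
    ∫ y, fderiv ℝ f y (pushforwardField φ ψ X y) ∂(μ.map φ) =
      ∫ x, fderiv ℝ (f ∘ φ) x (X x) ∂μ := by
  have hY : AEStronglyMeasurable (pushforwardField φ ψ X) (μ.map φ) :=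
    ((hφ.continuous_fderiv one_ne_zero).aestronglyMeasurable.clm_apply hX).comp_leftInverse_map
      hφ.continuous.measurable hψ h
  rw [integral_map hφ.continuous.measurable.aemeasurable
    ((hf.continuous_fderiv one_ne_zero).aestronglyMeasurable.clm_apply hY)]
  refine integral_congr_ae (ae_of_all _ fun x => ?_)
  simp only [pushforwardField, Function.comp_apply, h x,
    fderiv_comp x (hf.differentiable one_ne_zero (φ x)) (hφ.differentiable one_ne_zero x),
    ContinuousLinearMap.comp_apply]

lemma InKerDiv.pushforwardField (hX : InKerDiv μ X) (hφ : ContDiff ℝ (⊤ : ℕ∞) φ)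
    (hψ : Measurable ψ) (h : Function.LeftInverse ψ φ) (hK : IsCompact K)
    (hid : ∀ x ∉ K, φ x = x) :
    InKerDiv (μ.map φ) (pushforwardField φ ψ X) := by
  have hφ₁ : ContDiff ℝ 1 φ := hφ.of_le (by exact_mod_cast le_top)
  refine ⟨hX.1.pushforwardField hφ₁ hψ h hK hid, fun f hf => ?_⟩
  rw [integral_fderiv_apply_pushforwardField hX.1.1 hφ₁ hψ h
    (hf.1.of_le (by exact_mod_cast le_top))]
  exact hX.2 (f ∘ φ) ⟨hf.1.comp hφ, hf.2.comp_of_eq_id_off_compact hK hid⟩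

end PushforwardField

theorem stmt1_general {D : ℕ} (μ : Measure (Euc D))
    (φ ψ : Euc D → Euc D)
    (hφ : ContDiff ℝ (⊤ : ℕ∞) φ) (hψ : ContDiff ℝ (⊤ : ℕ∞) ψ)
    (hlinv : Function.LeftInverse ψ φ)
    (K : Set (Euc D)) (hK : IsCompact K) (hid : ∀ x ∉ K, φ x = x)
    (Cφ : ℝ) (hCφ : Cφ = ⨆ x : Euc D, ‖fderiv ℝ φ x‖) :
    (∀ X : Euc D → Euc D, MemL2 μ X →
      MemL2 (μ.map φ) (fun y => fderiv ℝ φ (ψ y) (X (ψ y))) ∧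
      L2norm (μ.map φ) (fun y => fderiv ℝ φ (ψ y) (X (ψ y))) ≤ Cφ * L2norm μ X) ∧
    (∀ X : Euc D → Euc D, InKerDiv μ X →
      InKerDiv (μ.map φ) (fun y => fderiv ℝ φ (ψ y) (X (ψ y)))) := by
  have hφ₁ : ContDiff ℝ 1 φ := hφ.of_le (by exact_mod_cast le_top)
  have hψm : Measurable ψ := hψ.continuous.measurable
  subst hCφ
  exact ⟨fun X hX => ⟨hX.pushforwardField hφ₁ hψm hlinv hK hid,
      L2norm_pushforwardField_le hX hφ₁ hψm hlinv hK hid⟩,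
    fun X hX => hX.pushforwardField hφ hψm hlinv hK hid⟩

/-- Push-forward of vector fields by a compactly supported diffeomorphism is bounded from
`L²(μ)` to `L²(φ_#μ)` by the sup norm of `∇φ`, and maps `Ker(div_μ)` into `Ker(div_{φ_#μ})`. -/
theorem stmt1 {D : ℕ} (μ : Measure (Euc D)) (hμ : InM μ)
    (φ ψ : Euc D → Euc D)
    (hφ : ContDiff ℝ (⊤ : ℕ∞) φ) (hψ : ContDiff ℝ (⊤ : ℕ∞) ψ)
    (hlinv : Function.LeftInverse ψ φ) (hrinv : Function.RightInverse ψ φ)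
    (K : Set (Euc D)) (hK : IsCompact K) (hid : ∀ x ∉ K, φ x = x)
    (Cφ : ℝ) (hCφ : Cφ = ⨆ x : Euc D, ‖fderiv ℝ φ x‖) :
    (∀ X : Euc D → Euc D, MemL2 μ X →
      MemL2 (μ.map φ) (fun y => fderiv ℝ φ (ψ y) (X (ψ y))) ∧
      L2norm (μ.map φ) (fun y => fderiv ℝ φ (ψ y) (X (ψ y))) ≤ Cφ * L2norm μ X) ∧
    (∀ X : Euc D → Euc D, InKerDiv μ X →
      InKerDiv (μ.map φ) (fun y => fderiv ℝ φ (ψ y) (X (ψ y)))) :=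
  stmt1_general μ φ ψ hφ hψ hlinv K hK hid Cφ hCφ
end
end

section
/- Let F : M → ℝ be differentiable at every μ ∈ M. Fix μ ∈ M, f ∈ C_c^∞(ℝ^D), X := ∇f, and set ν_t := (Id + tX)_#μ. Then F(ν_t) = F(μ) + t∫⟨∇_μF, X⟩dμ + o(t) as t → 0. -/
open MeasureTheory Filter Set
open scoped RealInnerProductSpace Topology

noncomputable section

variable {D : ℕ}

/-! For `|t|` small, `x ↦ x + t∇f(x)` is the gradient of the convex function `|x|²/2 + t f`:
since `∇f` is Lipschitz, `x` minimises `x' ↦ |x' - (x + t∇f(x))|² + 2t f(x')`. Integrating the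
resulting inequality `|x - y|² ≥ ψᶜ(y) - 2t f(x)`, with `ψᶜ` the `c`-transform of `ψ = 2t f`,
against an arbitrary coupling shows that the plan `(Id, Id + t∇f)_#μ` is optimal (Knott–Smith).
Hence `W₂(μ, ν_t) = |t| ‖∇f‖_μ`, and the integral against this optimal plan in the definition of
differentiability is exactly `t ∫⟨∇_μF, ∇f⟩ dμ`. -/

section Taylor

variable {E F : Type*} [NormedAddCommGroup E] [NormedSpace ℝ E]
  [NormedAddCommGroup F] [NormedSpace ℝ F]

theorem norm_sub_sub_fderiv_le_of_lipschitzWith {f : E → F} {K : NNReal}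
    (hf : Differentiable ℝ f) (hK : LipschitzWith K (fderiv ℝ f)) (x z : E) :
    ‖f z - f x - fderiv ℝ f x (z - x)‖ ≤ K * ‖z - x‖ ^ 2 := by
  have hbound : ∀ w ∈ Metric.closedBall x ‖z - x‖,
      ‖fderiv ℝ f w - fderiv ℝ f x‖ ≤ K * ‖z - x‖ := fun w hw =>
    (hK.norm_sub_le w x).trans (by gcongr; rwa [Metric.mem_closedBall, dist_eq_norm] at hw)
  calc ‖f z - f x - fderiv ℝ f x (z - x)‖ ≤ K * ‖z - x‖ * ‖z - x‖ :=
        (convex_closedBall x _).norm_image_sub_le_of_norm_fderiv_le' (fun w _ => hf w) hbound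
          (Metric.mem_closedBall_self (norm_nonneg _)) (by simp [dist_eq_norm])
    _ = K * ‖z - x‖ ^ 2 := by ring

theorem ContDiff.exists_norm_sub_sub_fderiv_le_of_hasCompactSupport {f : E → F}
    (hf : ContDiff ℝ 2 f) (hc : HasCompactSupport f) :
    ∃ K : NNReal, ∀ x z, ‖f z - f x - fderiv ℝ f x (z - x)‖ ≤ K * ‖z - x‖ ^ 2 := by
  obtain ⟨K, hK⟩ := (hf.fderiv_right (m := 1) (by norm_num)).lipschitzWith_of_hasCompactSupport
    (hc.fderiv ℝ) one_ne_zero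
  exact ⟨K, norm_sub_sub_fderiv_le_of_lipschitzWith (hf.differentiable (by norm_num)) hK⟩

end Taylor

section Gradient

variable {E : Type*} [NormedAddCommGroup E] [InnerProductSpace ℝ E] {f : E → ℝ}

theorem isMinOn_norm_sub_add_smul_sq_add_of_abs_le {x g : E} {t K : ℝ}
    (hK : ∀ z, |f z - f x - ⟪g, z - x⟫| ≤ K * ‖z - x‖ ^ 2) (ht : 2 * |t| * K ≤ 1) :
    IsMinOn (fun z => ‖z - (x + t • g)‖ ^ 2 + 2 * t * f z) univ x := by
  intro z _
  have hexpand : ‖z - (x + t • g)‖ ^ 2 = ‖z - x‖ ^ 2 - 2 * t * ⟪g, z - x⟫ + ‖t • g‖ ^ 2 := by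
    rw [← sub_sub, norm_sub_sq_real, real_inner_smul_right, real_inner_comm]
    ring
  have hremainder : |t * (f z - f x - ⟪g, z - x⟫)| ≤ ‖z - x‖ ^ 2 / 2 := by
    rw [abs_mul]
    nlinarith [mul_le_mul_of_nonneg_left (hK z) (abs_nonneg t), sq_nonneg ‖z - x‖]
  simp only [mem_ofPred_eq, sub_add_cancel_left, norm_neg, hexpand]
  nlinarith [neg_abs_le (t * (f z - f x - ⟪g, z - x⟫))]

variable [CompleteSpace E]

theorem HasCompactSupport.gradient (hc : HasCompactSupport f) : HasCompactSupport (gradient f) :=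
  (hc.fderiv ℝ).comp_left (map_zero _)

theorem ContDiff.continuous_gradient (hf : ContDiff ℝ 1 f) : Continuous (gradient f) :=
  (InnerProductSpace.toDual ℝ E).symm.continuous.comp (hf.continuous_fderiv one_ne_zero)

end Gradient

section Transport

variable {α β : Type*} [MeasurableSpace α] [MeasurableSpace β]

def transportPlan (μ : Measure α) (T : α → β) : Measure (α × β) :=
  μ.map fun x => (x, T x)

theorem measurableEmbedding_graph [MeasurableEq β] {T : α → β} (hT : Measurable T) :
    MeasurableEmbedding fun x => (x, T x) := by
  refine .of_measurable_inverse (measurable_id.prodMk hT) ?_ measurable_fst fun _ => rfl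
  have hrange : range (fun x => (x, T x)) = {p | T p.1 = p.2} := by
    ext ⟨a, b⟩
    simp [eq_comm]
  exact hrange ▸ measurableSet_eq_fun (hT.comp measurable_fst) measurable_snd

theorem integral_transportPlan [MeasurableEq β] {G : Type*} [NormedAddCommGroup G]
    [NormedSpace ℝ G] {μ : Measure α} {T : α → β} (hT : Measurable T) (g : α × β → G) :
    ∫ p, g p ∂transportPlan μ T = ∫ x, g (x, T x) ∂μ :=
  (measurableEmbedding_graph hT).integral_map g

end Transport

section Couplings

variable {μ ν : Measure (Euc D)} {γ : Measure (Euc D × Euc D)}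

theorem isCoupling_transportPlan [IsProbabilityMeasure μ] {T : Euc D → Euc D}
    (hT : Measurable T) : IsCoupling μ (μ.map T) (transportPlan μ T) := by
  have hgraph : Measurable fun x => (x, T x) := measurable_id.prodMk hT
  refine ⟨Measure.isProbabilityMeasure_map hgraph.aemeasurable, ?_, ?_⟩
  · rw [transportPlan, Measure.map_map measurable_fst hgraph]
    exact Measure.map_id
  · rw [transportPlan, Measure.map_map measurable_snd hgraph]
    rfl

theorem IsCoupling.integrable_comp_fst (hγ : IsCoupling μ ν γ) {g : Euc D → ℝ}
    (hg : Integrable g μ) : Integrable (fun p => g p.1) γ := by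
  obtain ⟨-, rfl, rfl⟩ := hγ
  exact hg.comp_measurable measurable_fst

theorem IsCoupling.integrable_comp_snd (hγ : IsCoupling μ ν γ) {g : Euc D → ℝ}
    (hg : Integrable g ν) : Integrable (fun p => g p.2) γ := by
  obtain ⟨-, rfl, rfl⟩ := hγ
  exact hg.comp_measurable measurable_snd

theorem IsCoupling.integral_comp_fst (hγ : IsCoupling μ ν γ) {g : Euc D → ℝ}
    (hg : AEStronglyMeasurable g μ) : ∫ p, g p.1 ∂γ = ∫ x, g x ∂μ := by
  obtain ⟨-, rfl, rfl⟩ := hγ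
  exact (integral_map measurable_fst.aemeasurable hg).symm

theorem IsCoupling.integral_comp_snd (hγ : IsCoupling μ ν γ) {g : Euc D → ℝ}
    (hg : AEStronglyMeasurable g ν) : ∫ p, g p.2 ∂γ = ∫ y, g y ∂ν := by
  obtain ⟨-, rfl, rfl⟩ := hγ
  exact (integral_map measurable_snd.aemeasurable hg).symm

theorem IsCoupling.integrable_norm_sub_sq (hμ : InM μ) (hν : InM ν) (hγ : IsCoupling μ ν γ) :
    Integrable (fun p => ‖p.1 - p.2‖ ^ 2) γ := by
  refine (((hγ.integrable_comp_fst hμ.2).add (hγ.integrable_comp_snd hν.2)).const_mul 2).mono'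
    (by fun_prop) (ae_of_all _ fun p => ?_)
  simp only [Pi.add_apply, Real.norm_of_nonneg (sq_nonneg _)]
  nlinarith [norm_sub_le p.1 p.2, norm_nonneg (p.1 - p.2), sq_nonneg (‖p.1‖ - ‖p.2‖)]

theorem isOptCoupling_of_forall_Wcost_le {γ₀ : Measure (Euc D × Euc D)}
    (hγ₀ : IsCoupling μ ν γ₀) (hle : ∀ γ, IsCoupling μ ν γ → Wcost γ₀ ≤ Wcost γ) :
    IsOptCoupling μ ν γ₀ := by
  have hbdd : BddBelow (Wcost '' {γ | IsCoupling μ ν γ}) :=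
    ⟨0, by rintro _ ⟨γ, -, rfl⟩; exact integral_nonneg fun _ => sq_nonneg _⟩
  refine ⟨hγ₀, le_antisymm ?_ (csInf_le hbdd ⟨γ₀, hγ₀, rfl⟩)⟩
  exact le_csInf ⟨_, γ₀, hγ₀, rfl⟩ (by rintro _ ⟨γ, hγ, rfl⟩; exact hle γ hγ)

theorem InM.map_of_norm_sub_le (hμ : InM μ) {T : Euc D → Euc D} (hT : Measurable T) {C : ℝ}
    (hC : ∀ x, ‖T x - x‖ ≤ C) : InM (μ.map T) := by
  have := hμ.1
  refine ⟨Measure.isProbabilityMeasure_map hT.aemeasurable, ?_⟩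
  rw [integrable_map_measure (by fun_prop) hT.aemeasurable]
  refine ((hμ.2.const_mul 2).add (integrable_const (2 * C ^ 2))).mono'
    (by fun_prop) (ae_of_all _ fun x => ?_)
  have hTx : ‖T x‖ ≤ ‖x‖ + C := by
    linarith [norm_le_norm_add_norm_sub' (T x) x, hC x]
  simp only [Function.comp_apply, Pi.add_apply, Real.norm_of_nonneg (sq_nonneg _)]
  nlinarith [norm_nonneg (T x), sq_nonneg (‖x‖ - C)]

end Couplings

section CTransform

variable {E : Type*} [NormedAddCommGroup E] {ψ : E → ℝ} {C : ℝ}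

/-- The `c`-transform for the cost `‖x - y‖²`. A real `⨅`, hence junk unless `ψ` is bounded below. -/
def cTransform (ψ : E → ℝ) (y : E) : ℝ :=
  ⨅ x, (‖x - y‖ ^ 2 + ψ x)

variable (hψ : ∀ x, |ψ x| ≤ C)
include hψ

theorem bddBelow_range_norm_sub_sq_add (y : E) :
    BddBelow (range fun x => ‖x - y‖ ^ 2 + ψ x) :=
  ⟨-C, by rintro _ ⟨x, rfl⟩; nlinarith [neg_abs_le (ψ x), hψ x, sq_nonneg ‖x - y‖]⟩

theorem cTransform_le (x y : E) : cTransform ψ y ≤ ‖x - y‖ ^ 2 + ψ x :=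
  ciInf_le (bddBelow_range_norm_sub_sq_add hψ y) x

theorem cTransform_eq_of_isMinOn {x y : E}
    (hmin : IsMinOn (fun x' => ‖x' - y‖ ^ 2 + ψ x') univ x) :
    cTransform ψ y = ‖x - y‖ ^ 2 + ψ x :=
  le_antisymm (cTransform_le hψ x y) (le_ciInf fun x' => hmin (mem_univ x'))

theorem abs_cTransform_le (y : E) : |cTransform ψ y| ≤ C := by
  refine abs_le.2 ⟨le_ciInf fun x => ?_, ?_⟩
  · nlinarith [neg_abs_le (ψ x), hψ x, sq_nonneg ‖x - y‖]
  · have hy := cTransform_le hψ y y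
    simp only [sub_self, norm_zero, ne_eq, OfNat.ofNat_ne_zero, not_false_eq_true, zero_pow,
      zero_add] at hy
    linarith [le_abs_self (ψ y), hψ y]

theorem measurable_cTransform [MeasurableSpace E] [OpensMeasurableSpace E] :
    Measurable (cTransform ψ) :=
  (upperSemicontinuous_ciInf (bddBelow_range_norm_sub_sq_add hψ) fun x =>
    ((by fun_prop : Continuous fun y => ‖x - y‖ ^ 2).add continuous_const).upperSemicontinuous
    ).measurable

end CTransform

/-- Knott–Smith optimality criterion, in its `c`-concave form. -/
theorem isOptCoupling_transportPlan {μ : Measure (Euc D)} (hμ : InM μ) {T : Euc D → Euc D}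
    (hT : Measurable T) (hν : InM (μ.map T)) {ψ : Euc D → ℝ} (hψm : Measurable ψ) {C : ℝ}
    (hψ : ∀ x, |ψ x| ≤ C) (hmin : ∀ x, IsMinOn (fun x' => ‖x' - T x‖ ^ 2 + ψ x') univ x) :
    IsOptCoupling μ (μ.map T) (transportPlan μ T) := by
  have := hμ.1
  have := hν.1
  refine isOptCoupling_of_forall_Wcost_le (isCoupling_transportPlan hT) fun γ hγ => ?_
  have hv_meas := measurable_cTransform hψ
  have hψ_int : Integrable ψ μ :=
    .of_bound hψm.aestronglyMeasurable C (ae_of_all _ fun x => hψ x)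
  have hv_int : Integrable (cTransform ψ) (μ.map T) :=
    .of_bound hv_meas.aestronglyMeasurable C (ae_of_all _ fun y => abs_cTransform_le hψ y)
  have hvT_int : Integrable (fun x => cTransform ψ (T x)) μ :=
    (integrable_map_measure hv_int.1 hT.aemeasurable).1 hv_int
  calc Wcost (transportPlan μ T) = ∫ x, (cTransform ψ (T x) - ψ x) ∂μ := by
        rw [Wcost, integral_transportPlan hT]
        congr 1 with x
        rw [cTransform_eq_of_isMinOn hψ (hmin x)]
        ring
    _ = ∫ p, (cTransform ψ p.2 - ψ p.1) ∂γ := by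
        rw [integral_sub hvT_int hψ_int,
          integral_sub (hγ.integrable_comp_snd hv_int) (hγ.integrable_comp_fst hψ_int),
          hγ.integral_comp_snd hv_int.1, hγ.integral_comp_fst hψ_int.1,
          integral_map hT.aemeasurable hv_int.1]
    _ ≤ Wcost γ := integral_mono ((hγ.integrable_comp_snd hv_int).sub
          (hγ.integrable_comp_fst hψ_int)) (hγ.integrable_norm_sub_sq hμ hν) fun p => by
        linarith [cTransform_le hψ p.1 p.2]

section GradientPerturbation

variable {μ : Measure (Euc D)} {X : Euc D → Euc D}

theorem exists_isOptCoupling_transportPlan_add_smul_gradient (hμ : InM μ) {f : Euc D → ℝ}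
    (hf : ContDiff ℝ 2 f) (hc : HasCompactSupport f) :
    ∃ r > 0, ∀ t : ℝ, |t| < r → InM (μ.map fun x => x + t • gradient f x) ∧
      IsOptCoupling μ (μ.map fun x => x + t • gradient f x)
        (transportPlan μ fun x => x + t • gradient f x) := by
  obtain ⟨K, hK⟩ := hf.exists_norm_sub_sub_fderiv_le_of_hasCompactSupport hc
  have hgrad : Continuous (gradient f) := (hf.of_le (by norm_num)).continuous_gradient
  obtain ⟨B, hB⟩ := hc.gradient.exists_bound_of_continuous hgrad
  obtain ⟨Cf, hCf⟩ := hc.exists_bound_of_continuous hf.continuous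
  refine ⟨1 / (2 * (K + 1)), by positivity, fun t ht => ?_⟩
  have htK : 2 * |t| * K ≤ 1 := by
    rw [lt_div_iff₀ (by positivity)] at ht
    nlinarith [abs_nonneg t]
  have hT : Measurable fun x => x + t • gradient f x := by fun_prop
  have hν : InM (μ.map fun x => x + t • gradient f x) :=
    hμ.map_of_norm_sub_le hT (C := |t| * B) fun x => by
      simpa [norm_smul] using mul_le_mul_of_nonneg_left (hB x) (abs_nonneg t)
  refine ⟨hν, isOptCoupling_transportPlan hμ hT hν (ψ := fun x => 2 * t * f x)
    (C := 2 * |t| * Cf) (hf.continuous.measurable.const_mul _) (fun x => ?_) fun x => ?_⟩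
  · simpa [abs_mul] using mul_le_mul_of_nonneg_left (hCf x) (by positivity : 0 ≤ 2 * |t|)
  · refine isMinOn_norm_sub_add_smul_sq_add_of_abs_le (fun z => ?_) htK
    simpa [inner_gradient_left] using hK x z

theorem W2_transportPlan_add_smul (hX : Measurable X) {t : ℝ}
    (hopt : IsOptCoupling μ (μ.map fun x => x + t • X x) (transportPlan μ fun x => x + t • X x)) :
    W2 μ (μ.map fun x => x + t • X x) = |t| * √(∫ x, ‖X x‖ ^ 2 ∂μ) := by
  rw [W2, ← hopt.2, Wcost, integral_transportPlan (by fun_prop)]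
  simp_rw [sub_add_cancel_left, norm_neg, norm_smul, mul_pow, Real.norm_eq_abs, sq_abs]
  rw [integral_const_mul, Real.sqrt_mul (sq_nonneg t), Real.sqrt_sq_eq_abs]

theorem integral_inner_transportPlan_add_smul (hX : Measurable X) (G : Euc D → Euc D) (t : ℝ) :
    ∫ p, ⟪G p.1, p.2 - p.1⟫ ∂(transportPlan μ fun x => x + t • X x) =
      t * ∫ x, ⟪G x, X x⟫ ∂μ := by
  rw [integral_transportPlan (by fun_prop)]
  simp_rw [add_sub_cancel_left, real_inner_smul_right]
  exact integral_const_mul t _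

end GradientPerturbation

theorem HasWGradient.abs_sub_sub_le_of_isOptCoupling {F : Measure (Euc D) → ℝ}
    {μ : Measure (Euc D)} {G : Euc D → Euc D} (hG : HasWGradient F μ G)
    {ν : ℝ → Measure (Euc D)} {γ : ℝ → Measure (Euc D × Euc D)} {r K a : ℝ} (hr : 0 < r)
    (hν : ∀ t, |t| < r → InM (ν t)) (hγ : ∀ t, |t| < r → IsOptCoupling μ (ν t) (γ t))
    (hW : ∀ t, |t| < r → W2 μ (ν t) ≤ K * |t|)
    (hint : ∀ t, |t| < r → ∫ p, ⟪G p.1, p.2 - p.1⟫ ∂γ t = t * a) :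
    ∀ ε > 0, ∃ δ > 0, ∀ t : ℝ, |t| < δ → |F (ν t) - F μ - t * a| ≤ ε * |t| := by
  intro ε hε
  obtain ⟨δ, hδ, hdiff⟩ := hG.2 (ε / (|K| + 1)) (by positivity)
  refine ⟨min r (δ / (|K| + 1)), by positivity, fun t ht => ?_⟩
  have htr : |t| < r := ht.trans_le (min_le_left _ _)
  have hWK : W2 μ (ν t) ≤ (|K| + 1) * |t| :=
    (hW t htr).trans (by gcongr; linarith [le_abs_self K])
  have hWδ : W2 μ (ν t) < δ := by
    have := ht.trans_le (min_le_right _ _)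
    rw [lt_div_iff₀ (by positivity)] at this
    linarith
  calc |F (ν t) - F μ - t * a| ≤ ε / (|K| + 1) * W2 μ (ν t) := by
        simpa [hint t htr] using hdiff (ν t) (hν t htr) hWδ (γ t) (hγ t htr)
    _ ≤ ε / (|K| + 1) * ((|K| + 1) * |t|) := by gcongr
    _ = ε * |t| := by field_simp

theorem stmt3_general {D : ℕ} (F : Measure (Euc D) → ℝ)
    (μ : Measure (Euc D)) (hμ : InM μ)
    (f : Euc D → ℝ) (hf : Cinfc f)
    (G : Euc D → Euc D) (hG : HasWGradient F μ G) :
    ∀ ε > 0, ∃ δ > 0, ∀ t : ℝ, |t| < δ →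
      |F (μ.map (fun x => x + t • gradient f x)) - F μ -
        t * ∫ x, ⟪G x, gradient f x⟫ ∂μ| ≤ ε * |t| := by
  have hf2 : ContDiff ℝ 2 f := hf.1.of_le (WithTop.coe_le_coe.2 le_top)
  have hgrad : Measurable (gradient f) := (hf2.of_le (by norm_num)).continuous_gradient.measurable
  obtain ⟨r, hr, hopt⟩ := exists_isOptCoupling_transportPlan_add_smul_gradient hμ hf2 hf.2
  refine hG.abs_sub_sub_le_of_isOptCoupling hr (fun t ht => (hopt t ht).1)
    (fun t ht => (hopt t ht).2) (K := √(∫ x, ‖gradient f x‖ ^ 2 ∂μ)) (fun t ht => ?_)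
    fun t _ => integral_inner_transportPlan_add_smul hgrad G t
  rw [W2_transportPlan_add_smul hgrad (hopt t ht).2, mul_comm]

/-- First order expansion of a differentiable function along the perturbation
`ν_t := (Id + t∇f)_#μ`: `F(ν_t) = F(μ) + t ∫⟨∇_μF, ∇f⟩ dμ + o(t)`. -/
theorem stmt3 {D : ℕ} (F : Measure (Euc D) → ℝ)
    (hF : ∀ ν : Measure (Euc D), InM ν → ∃ G : Euc D → Euc D, HasWGradient F ν G)
    (μ : Measure (Euc D)) (hμ : InM μ)
    (f : Euc D → ℝ) (hf : Cinfc f)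
    (G : Euc D → Euc D) (hG : HasWGradient F μ G) :
    ∀ ε > 0, ∃ δ > 0, ∀ t : ℝ, |t| < δ →
      |F (μ.map (fun x => x + t • gradient f x)) - F μ -
        t * ∫ x, ⟪G x, gradient f x⟫ ∂μ| ≤ ε * |t| :=
  stmt3_general F μ hμ f hf G hG
end
end

section
/- Let ρ ∈ C²((0,1)×(0,T)×ℝ^D) with ρ > 0 be such that each ρ(s,t,·) is a probability density, and let v, w ∈ C²((0,1)×(0,T)×ℝ^D; ℝ^D) be bounded with bounded derivatives, satisfying pointwise the continuity equations ∂_t ρ + ∇·(ρv) = 0 and ∂_s ρ + ∇·(ρw) = 0. Then for every (s,t) ∈ (0,1)×(0,T) and every φ ∈ C_c^∞(ℝ^D), ∫ ⟨∇φ, ∂_t w_t^s − ∂_s v_t^s − [w_t^s, v_t^s]⟩ ρ(s,t,x) dx = 0; that is, (∂_t w_t^s − ∂_s v_t^s) − [w_t^s, v_t^s] belongs to Ker(div_{ρ(s,t,·)·L^D}). Here [X,Y] := ∇Y·X − ∇X·Y and L^D is Lebesgue measure on ℝ^D. -/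
/-!
Write `J = ρ v` and `K = ρ w` for the two fluxes. The product rule and the continuity equations
give `ρ (∂ₜw - ∂ₛv) = ∂ₜK - ∂ₛJ + (div J) w - (div K) v`. Tested against `∇φ`, the first two terms
cancel: integrating by parts turns them into `φ ∂ₜ(div K) = -φ ∂ₜ∂ₛρ` and `φ ∂ₛ(div J) = -φ ∂ₛ∂ₜρ`,
and mixed partials commute. Integrating the last two terms by parts once more, the terms with the
Hessian of `φ` cancel by its symmetry, and what remains is `∫ ρ ⟪∇φ, ∇v·w - ∇w·v⟫`.
-/

open MeasureTheory Filter Set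
open scoped RealInnerProductSpace Topology

noncomputable section

variable {D : ℕ}

/-- Distributional divergence of a vector field: `div Z (x) = tr(∇Z(x))`. -/
def divVF {D : ℕ} (Z : Euc D → Euc D) (x : Euc D) : ℝ :=
  LinearMap.trace ℝ (Euc D) (fderiv ℝ Z x : Euc D →ₗ[ℝ] Euc D)

section MixedPartials

variable {E F : Type*} [NormedAddCommGroup E] [NormedSpace ℝ E]
  [NormedAddCommGroup F] [NormedSpace ℝ F]

theorem ContDiffAt.hasDerivAt_fderiv_slice {G : ℝ × E → F} {t : ℝ} {x : E}
    (hG : ContDiffAt ℝ 2 G (t, x)) :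
    HasDerivAt (fun τ => fderiv ℝ (fun y => G (τ, y)) x)
      (fderiv ℝ (fun y => deriv (fun τ => G (τ, y)) t) x) t := by
  -- Near `(t, x)` both partial derivatives are read off `fderiv ℝ G`; the claim is then the
  -- symmetry of the second derivative of `G` at `(t, x)`.
  have hdiff : ∀ᶠ q in 𝓝 (t, x), DifferentiableAt ℝ G q :=
    (hG.eventually (by simp)).mono fun q hq => hq.differentiableAt two_ne_zero
  have hG2 : HasFDerivAt (fderiv ℝ G) (fderiv ℝ (fderiv ℝ G) (t, x)) (t, x) :=
    ((hG.fderiv_right (m := 1) le_rfl).differentiableAt one_ne_zero).hasFDerivAt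
  have hpath : HasDerivAt (fun τ : ℝ => (τ, x)) (1, 0) t :=
    (hasDerivAt_id t).prodMk (hasDerivAt_const t x)
  have h_y : (fun τ => fderiv ℝ (fun y => G (τ, y)) x) =ᶠ[𝓝 t]
      fun τ => (fderiv ℝ G (τ, x)).comp (ContinuousLinearMap.inr ℝ ℝ E) := by
    filter_upwards [hpath.continuousAt.preimage_mem_nhds hdiff] with τ hτ
    exact (hτ.hasFDerivAt.comp x (hasFDerivAt_prodMk_right (𝕜 := ℝ) τ x)).fderiv
  have h_t : (fun y => deriv (fun τ => G (τ, y)) t) =ᶠ[𝓝 x]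
      fun y => fderiv ℝ G (t, y) (1, 0) := by
    filter_upwards [(hasFDerivAt_prodMk_right (𝕜 := ℝ) t x).continuousAt.preimage_mem_nhds hdiff]
      with y hy
    exact (hy.hasFDerivAt.comp_hasDerivAt t ((hasDerivAt_id t).prodMk (hasDerivAt_const t y))).deriv
  have h_t_deriv : HasFDerivAt (fun y => fderiv ℝ G (t, y) (1, 0)) _ x :=
    (hG2.comp x (hasFDerivAt_prodMk_right (𝕜 := ℝ) t x)).clm_apply
      (hasFDerivAt_const ((1 : ℝ), (0 : E)) x)
  rw [h_t.fderiv_eq, h_t_deriv.fderiv]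
  have h_y_deriv : HasDerivAt (fun τ => (fderiv ℝ G (τ, x)).comp (ContinuousLinearMap.inr ℝ ℝ E))
      ((fderiv ℝ (fderiv ℝ G) (t, x) (1, 0)).comp (ContinuousLinearMap.inr ℝ ℝ E)) t := by
    have h1 : HasDerivAt (fun τ => fderiv ℝ G (τ, x)) (fderiv ℝ (fderiv ℝ G) (t, x) (1, 0)) t :=
      hG2.comp_hasDerivAt t hpath
    simpa using h1.clm_comp (hasDerivAt_const t (ContinuousLinearMap.inr ℝ ℝ E))
  refine (h_y_deriv.congr_of_eventuallyEq h_y).congr_deriv ?_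
  ext v
  simp [hG.isSymmSndFDerivAt (by simp) (1, 0)]

theorem ContDiffAt.deriv_deriv_comm {R : ℝ × ℝ → F} {t x : ℝ} (hR : ContDiffAt ℝ 2 R (t, x)) :
    deriv (fun τ => deriv (fun y => R (τ, y)) x) t =
      deriv (fun y => deriv (fun τ => R (τ, y)) t) x := by
  have h := hR.hasDerivAt_fderiv_slice.clm_apply (hasDerivAt_const t (1 : ℝ))
  simp only [fderiv_apply_one_eq_deriv, add_zero, map_zero] at h
  exact h.deriv

theorem contDiff_deriv_slice {G : ℝ × E → F} {t : ℝ} (hG : ∀ y, ContDiffAt ℝ 2 G (t, y)) :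
    ContDiff ℝ 1 (fun y => deriv (fun τ => G (τ, y)) t) := by
  have h : (fun y => deriv (fun τ => G (τ, y)) t) = fun y => fderiv ℝ G (t, y) (1, 0) :=
    funext fun y => (((hG y).differentiableAt two_ne_zero).hasFDerivAt.comp_hasDerivAt t
      ((hasDerivAt_id t).prodMk (hasDerivAt_const t y))).deriv
  rw [h, contDiff_iff_contDiffAt]
  exact fun y => (((hG y).fderiv_right le_rfl).comp y
    (contDiffAt_const.prodMk contDiffAt_id)).clm_apply contDiffAt_const

end MixedPartials

-- `divVF Z x` is `traceCLM D (fderiv ℝ Z x)` by definition.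
def traceCLM (D : ℕ) : (Euc D →L[ℝ] Euc D) →L[ℝ] ℝ :=
  LinearMap.toContinuousLinearMap (LinearMap.trace ℝ (Euc D) ∘ₗ ContinuousLinearMap.coeLM ℝ)

theorem continuous_divVF {Z : Euc D → Euc D} (hZ : ContDiff ℝ 1 Z) : Continuous (divVF Z) :=
  (traceCLM D).continuous.comp (hZ.continuous_fderiv one_ne_zero)

theorem ContDiffAt.hasDerivAt_divVF_slice {G : ℝ × Euc D → Euc D} {t : ℝ} {x : Euc D}
    (hG : ContDiffAt ℝ 2 G (t, x)) :
    HasDerivAt (fun τ => divVF (fun y => G (τ, y)) x)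
      (divVF (fun y => deriv (fun τ => G (τ, y)) t) x) t :=
  (traceCLM D).hasFDerivAt.comp_hasDerivAt t hG.hasDerivAt_fderiv_slice

theorem divVF_eq_sum (Z : Euc D → Euc D) (x : Euc D) :
    divVF Z x = ∑ i, fderiv ℝ Z x (EuclideanSpace.single i 1) i := by
  rw [divVF, LinearMap.trace_eq_matrix_trace ℝ (PiLp.basisFun 2 ℝ (Fin D)), Matrix.trace]
  refine Finset.sum_congr rfl fun i _ => ?_
  rw [Matrix.diag_apply, LinearMap.toMatrix_apply, PiLp.basisFun_repr, PiLp.basisFun_apply]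
  rfl

theorem ContinuousLinearMap.apply_eq_sum_mul (L : Euc D →L[ℝ] ℝ) (u : Euc D) :
    L u = ∑ i, L (EuclideanSpace.single i 1) * u i := by
  conv_lhs => rw [← (EuclideanSpace.basisFun (Fin D) ℝ).sum_repr u]
  simp [mul_comm]

theorem integral_fderiv_apply_eq_neg_integral_mul_divVF {f : Euc D → ℝ} {Z : Euc D → Euc D}
    (hf : ContDiff ℝ 1 f) (hfs : HasCompactSupport f) (hZ : ContDiff ℝ 1 Z) :
    ∫ x, fderiv ℝ f x (Z x) = -∫ x, f x * divVF Z x := by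
  set e : Fin D → Euc D := fun i => EuclideanSpace.single i 1
  have h_left : ∀ i, Integrable fun x => fderiv ℝ f x (e i) * Z x i := fun i =>
    (by fun_prop : Continuous _).integrable_of_hasCompactSupport
      (hfs.fderiv_apply (𝕜 := ℝ) (e i)).mul_right
  have h_right : ∀ i, Integrable fun x => f x * fderiv ℝ Z x (e i) i := fun i =>
    (by fun_prop : Continuous _).integrable_of_hasCompactSupport hfs.mul_right
  -- integration by parts for the bilinear form `(a, z) ↦ a * z i`
  have h_coord : ∀ i, ∫ x, f x * fderiv ℝ Z x (e i) i = -∫ x, fderiv ℝ f x (e i) * Z x i :=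
    fun i => by
      simpa using integral_bilinear_fderiv_right_eq_neg_left_of_integrable
        (B := ContinuousLinearMap.toSpanSingleton ℝ (EuclideanSpace.proj i)) (v := e i)
        (by simpa using h_left i) (by simpa using h_right i)
        (by simpa using ((by fun_prop : Continuous fun x => f x * Z x i)
          |>.integrable_of_hasCompactSupport hfs.mul_right))
        (fun x _ => hf.differentiable one_ne_zero x) (fun x _ => hZ.differentiable one_ne_zero x)
  calc ∫ x, fderiv ℝ f x (Z x)
      = ∑ i, ∫ x, fderiv ℝ f x (e i) * Z x i := by
        rw [← integral_finsetSum _ fun i _ => h_left i]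
        exact integral_congr_ae (.of_forall fun x => (fderiv ℝ f x).apply_eq_sum_mul (Z x))
    _ = -∫ x, f x * divVF Z x := by
        simp_rw [divVF_eq_sum, Finset.mul_sum]
        rw [integral_finsetSum _ fun i _ => h_right i, ← Finset.sum_neg_distrib]
        exact Finset.sum_congr rfl fun i _ => (neg_eq_iff_eq_neg.mpr (h_coord i)).symm

section CompactlySupported

variable {φ : Euc D → ℝ}

theorem Continuous.integrable_of_forall_notMem_tsupport {F : Type*} [NormedAddCommGroup F]
    {g : Euc D → F} (hg : Continuous g) (hφs : HasCompactSupport φ)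
    (h : ∀ x ∉ tsupport φ, g x = 0) : Integrable g :=
  hg.integrable_of_hasCompactSupport (.intro hφs h)

theorem fderiv_fderiv_of_notMem_tsupport {x : Euc D} (hx : x ∉ tsupport φ) :
    fderiv ℝ (fderiv ℝ φ) x = 0 :=
  fderiv_of_notMem_tsupport ℝ fun h => hx (tsupport_fderiv_subset ℝ h)

theorem integral_divVF_mul_fderiv_apply (hφ : ContDiff ℝ 2 φ) (hφs : HasCompactSupport φ)
    {J W : Euc D → Euc D} (hJ : ContDiff ℝ 1 J) (hW : ContDiff ℝ 1 W) :
    ∫ x, divVF J x * fderiv ℝ φ x (W x) =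
      -∫ x, (fderiv ℝ (fderiv ℝ φ) x (J x) (W x) + fderiv ℝ φ x (fderiv ℝ W x (J x))) := by
  have hdφ : ContDiff ℝ 1 (fderiv ℝ φ) := hφ.fderiv_right le_rfl
  have hf : ContDiff ℝ 1 fun x => fderiv ℝ φ x (W x) := hdφ.clm_apply hW
  have hfs : HasCompactSupport fun x => fderiv ℝ φ x (W x) :=
    .intro hφs fun x hx => by simp [fderiv_of_notMem_tsupport ℝ hx]
  have hderiv : ∀ x, fderiv ℝ (fun x => fderiv ℝ φ x (W x)) x (J x) =
      fderiv ℝ (fderiv ℝ φ) x (J x) (W x) + fderiv ℝ φ x (fderiv ℝ W x (J x)) := fun x => by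
    rw [((hdφ.differentiable one_ne_zero x).hasFDerivAt.clm_apply
      (hW.differentiable one_ne_zero x).hasFDerivAt).fderiv]
    simp [add_comm]
  calc ∫ x, divVF J x * fderiv ℝ φ x (W x)
      = -∫ x, fderiv ℝ (fun x => fderiv ℝ φ x (W x)) x (J x) := by
        simp_rw [integral_fderiv_apply_eq_neg_integral_mul_divVF hf hfs hJ, neg_neg, mul_comm]
    _ = _ := by simp_rw [hderiv]

theorem integral_divVF_smul_mul_fderiv_apply_sub (hφ : ContDiff ℝ 2 φ) (hφs : HasCompactSupport φ)
    {ρ : Euc D → ℝ} {V W : Euc D → Euc D} (hρ : ContDiff ℝ 1 ρ) (hV : ContDiff ℝ 1 V)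
    (hW : ContDiff ℝ 1 W) :
    ∫ x, (divVF (fun y => ρ y • V y) x * fderiv ℝ φ x (W x) -
        divVF (fun y => ρ y • W y) x * fderiv ℝ φ x (V x)) =
      ∫ x, ρ x * fderiv ℝ φ x (fderiv ℝ V x (W x) - fderiv ℝ W x (V x)) := by
  have hρV : ContDiff ℝ 1 fun y => ρ y • V y := hρ.smul hV
  have hρW : ContDiff ℝ 1 fun y => ρ y • W y := hρ.smul hW
  have hdφ := hφ.continuous_fderiv two_ne_zero
  have hd2φ := (hφ.fderiv_right (m := 1) le_rfl).continuous_fderiv one_ne_zero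
  have hdivV := continuous_divVF hρV
  have hdivW := continuous_divVF hρW
  rw [integral_sub, integral_divVF_mul_fderiv_apply hφ hφs hρV hW,
    integral_divVF_mul_fderiv_apply hφ hφs hρW hV, neg_sub_neg, ← integral_sub]
  · refine integral_congr_ae (.of_forall fun x => ?_)
    have hsymm := (hφ.contDiffAt (x := x)).isSymmSndFDerivAt (by simp) (V x) (W x)
    simp only [map_smul, map_sub, smul_apply, smul_eq_mul, hsymm]
    ring
  all_goals
    refine Continuous.integrable_of_forall_notMem_tsupport (by fun_prop) hφs fun x hx => ?_
    simp [fderiv_of_notMem_tsupport ℝ hx, fderiv_fderiv_of_notMem_tsupport hx]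

end CompactlySupported

section ContinuityEquations

variable {ρ : ℝ → ℝ → Euc D → ℝ} {v w : ℝ → ℝ → Euc D → Euc D} {s t : ℝ}

theorem integral_fderiv_apply_deriv_flux_comm {φ : Euc D → ℝ} (hφ : ContDiff ℝ 1 φ)
    (hφs : HasCompactSupport φ)
    (hR : ∀ x, ContDiffAt ℝ 2 (fun q : ℝ × ℝ => ρ q.1 q.2 x) (s, t))
    (hJw : ∀ y, ContDiffAt ℝ 2 (fun q : ℝ × Euc D => ρ s q.1 q.2 • w s q.1 q.2) (t, y))
    (hJv : ∀ y, ContDiffAt ℝ 2 (fun q : ℝ × Euc D => ρ q.1 t q.2 • v q.1 t q.2) (s, y))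
    (hce_t : ∀ᶠ σ in 𝓝 s, ∀ x,
      deriv (fun τ => ρ σ τ x) t + divVF (fun y => ρ σ t y • v σ t y) x = 0)
    (hce_s : ∀ᶠ τ in 𝓝 t, ∀ x,
      deriv (fun σ => ρ σ τ x) s + divVF (fun y => ρ s τ y • w s τ y) x = 0) :
    ∫ x, fderiv ℝ φ x (deriv (fun τ => ρ s τ x • w s τ x) t) =
      ∫ x, fderiv ℝ φ x (deriv (fun σ => ρ σ t x • v σ t x) s) := by
  rw [integral_fderiv_apply_eq_neg_integral_mul_divVF
      (Z := fun y => deriv (fun τ => ρ s τ y • w s τ y) t) hφ hφs (contDiff_deriv_slice hJw),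
    integral_fderiv_apply_eq_neg_integral_mul_divVF
      (Z := fun y => deriv (fun σ => ρ σ t y • v σ t y) s) hφ hφs (contDiff_deriv_slice hJv)]
  refine congrArg _ (integral_congr_ae (.of_forall fun x => congrArg (φ x * ·) ?_))
  have h_t : (fun τ => divVF (fun y => ρ s τ y • w s τ y) x) =ᶠ[𝓝 t]
      fun τ => -deriv (fun σ => ρ σ τ x) s :=
    hce_s.mono fun τ h => eq_neg_of_add_eq_zero_right (h x)
  have h_s : (fun σ => divVF (fun y => ρ σ t y • v σ t y) x) =ᶠ[𝓝 s]
      fun σ => -deriv (fun τ => ρ σ τ x) t :=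
    hce_t.mono fun σ h => eq_neg_of_add_eq_zero_right (h x)
  rw [← (hJw x).hasDerivAt_divVF_slice.deriv, ← (hJv x).hasDerivAt_divVF_slice.deriv]
  dsimp only
  rw [h_t.deriv_eq, h_s.deriv_eq, deriv.fun_neg, deriv.fun_neg, (hR x).deriv_deriv_comm]

theorem smul_sub_eq_deriv_flux_sub_deriv_flux {x : Euc D}
    (hρ : DifferentiableAt ℝ (fun p : ℝ × ℝ × Euc D => ρ p.1 p.2.1 p.2.2) (s, t, x))
    (hv : DifferentiableAt ℝ (fun p : ℝ × ℝ × Euc D => v p.1 p.2.1 p.2.2) (s, t, x))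
    (hw : DifferentiableAt ℝ (fun p : ℝ × ℝ × Euc D => w p.1 p.2.1 p.2.2) (s, t, x))
    (hce_t : deriv (fun τ => ρ s τ x) t + divVF (fun y => ρ s t y • v s t y) x = 0)
    (hce_s : deriv (fun σ => ρ σ t x) s + divVF (fun y => ρ s t y • w s t y) x = 0) :
    ρ s t x • (deriv (fun τ => w s τ x) t - deriv (fun σ => v σ t x) s) =
      deriv (fun τ => ρ s τ x • w s τ x) t - deriv (fun σ => ρ σ t x • v σ t x) s +
        (divVF (fun y => ρ s t y • v s t y) x • w s t x -
          divVF (fun y => ρ s t y • w s t y) x • v s t x) := by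
  have hρ_t : DifferentiableAt ℝ (fun τ => ρ s τ x) t :=
    hρ.comp (f := fun τ => (s, τ, x)) t (by fun_prop)
  have hw_t : DifferentiableAt ℝ (fun τ => w s τ x) t :=
    hw.comp (f := fun τ => (s, τ, x)) t (by fun_prop)
  have hρ_s : DifferentiableAt ℝ (fun σ => ρ σ t x) s :=
    hρ.comp (f := fun σ => (σ, t, x)) s (by fun_prop)
  have hv_s : DifferentiableAt ℝ (fun σ => v σ t x) s :=
    hv.comp (f := fun σ => (σ, t, x)) s (by fun_prop)
  rw [deriv_fun_smul hρ_t hw_t, deriv_fun_smul hρ_s hv_s,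
    eq_neg_of_add_eq_zero_left hce_t, eq_neg_of_add_eq_zero_left hce_s]
  module

theorem mul_inner_gradient_sub_bracket_eq {φ : Euc D → ℝ} {x : Euc D}
    (hρ : DifferentiableAt ℝ (fun p : ℝ × ℝ × Euc D => ρ p.1 p.2.1 p.2.2) (s, t, x))
    (hv : DifferentiableAt ℝ (fun p : ℝ × ℝ × Euc D => v p.1 p.2.1 p.2.2) (s, t, x))
    (hw : DifferentiableAt ℝ (fun p : ℝ × ℝ × Euc D => w p.1 p.2.1 p.2.2) (s, t, x))
    (hce_t : deriv (fun τ => ρ s τ x) t + divVF (fun y => ρ s t y • v s t y) x = 0)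
    (hce_s : deriv (fun σ => ρ σ t x) s + divVF (fun y => ρ s t y • w s t y) x = 0) :
    ρ s t x *
      ⟪gradient φ x,
        (deriv (fun τ => w s τ x) t - deriv (fun σ => v σ t x) s) -
          (fderiv ℝ (v s t) x (w s t x) - fderiv ℝ (w s t) x (v s t x))⟫ =
      fderiv ℝ φ x (deriv (fun τ => ρ s τ x • w s τ x) t) -
        fderiv ℝ φ x (deriv (fun σ => ρ σ t x • v σ t x) s) +
        ((divVF (fun y => ρ s t y • v s t y) x * fderiv ℝ φ x (w s t x) -
          divVF (fun y => ρ s t y • w s t y) x * fderiv ℝ φ x (v s t x)) -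
          ρ s t x *
            fderiv ℝ φ x (fderiv ℝ (v s t) x (w s t x) - fderiv ℝ (w s t) x (v s t x))) := by
  rw [inner_gradient_left, ← smul_eq_mul, ← map_smul, smul_sub,
    smul_sub_eq_deriv_flux_sub_deriv_flux hρ hv hw hce_t hce_s]
  simp only [map_add, map_sub, map_smul, smul_eq_mul, add_sub_assoc]

theorem integral_mul_inner_gradient_sub_bracket_eq_zero {φ : Euc D → ℝ} (hφ : ContDiff ℝ 2 φ)
    (hφs : HasCompactSupport φ)
    (hρ : ∀ x, ContDiffAt ℝ 2 (fun p : ℝ × ℝ × Euc D => ρ p.1 p.2.1 p.2.2) (s, t, x))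
    (hv : ∀ x, ContDiffAt ℝ 2 (fun p : ℝ × ℝ × Euc D => v p.1 p.2.1 p.2.2) (s, t, x))
    (hw : ∀ x, ContDiffAt ℝ 2 (fun p : ℝ × ℝ × Euc D => w p.1 p.2.1 p.2.2) (s, t, x))
    (hce_t : ∀ᶠ σ in 𝓝 s, ∀ x,
      deriv (fun τ => ρ σ τ x) t + divVF (fun y => ρ σ t y • v σ t y) x = 0)
    (hce_s : ∀ᶠ τ in 𝓝 t, ∀ x,
      deriv (fun σ => ρ σ τ x) s + divVF (fun y => ρ s τ y • w s τ y) x = 0) :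
    ∫ x, (ρ s t x *
        ⟪gradient φ x,
          (deriv (fun τ => w s τ x) t - deriv (fun σ => v σ t x) s) -
            (fderiv ℝ (v s t) x (w s t x) - fderiv ℝ (w s t) x (v s t x))⟫) = 0 := by
  have hρx : ContDiff ℝ 2 (ρ s t) := contDiff_iff_contDiffAt.2 fun x =>
    (hρ x).comp (f := fun y => (s, t, y)) x (by fun_prop)
  have hvx : ContDiff ℝ 2 (v s t) := contDiff_iff_contDiffAt.2 fun x =>
    (hv x).comp (f := fun y => (s, t, y)) x (by fun_prop)
  have hwx : ContDiff ℝ 2 (w s t) := contDiff_iff_contDiffAt.2 fun x =>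
    (hw x).comp (f := fun y => (s, t, y)) x (by fun_prop)
  have hR : ∀ x, ContDiffAt ℝ 2 (fun q : ℝ × ℝ => ρ q.1 q.2 x) (s, t) := fun x =>
    (hρ x).comp (f := fun q : ℝ × ℝ => (q.1, q.2, x)) (s, t) (by fun_prop)
  have hJw : ∀ y, ContDiffAt ℝ 2 (fun q : ℝ × Euc D => ρ s q.1 q.2 • w s q.1 q.2) (t, y) :=
    fun y => ((hρ y).comp (f := fun q : ℝ × Euc D => (s, q.1, q.2)) (t, y) (by fun_prop)).smul
      ((hw y).comp (f := fun q : ℝ × Euc D => (s, q.1, q.2)) (t, y) (by fun_prop))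
  have hJv : ∀ y, ContDiffAt ℝ 2 (fun q : ℝ × Euc D => ρ q.1 t q.2 • v q.1 t q.2) (s, y) :=
    fun y => ((hρ y).comp (f := fun q : ℝ × Euc D => (q.1, t, q.2)) (s, y) (by fun_prop)).smul
      ((hv y).comp (f := fun q : ℝ × Euc D => (q.1, t, q.2)) (s, y) (by fun_prop))
  have hdφ := hφ.continuous_fderiv two_ne_zero
  have hdv := hvx.continuous_fderiv two_ne_zero
  have hdw := hwx.continuous_fderiv two_ne_zero
  have hdivv := continuous_divVF ((hρx.smul hvx).of_le one_le_two)
  have hdivw := continuous_divVF ((hρx.smul hwx).of_le one_le_two)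
  have hJwc := (contDiff_deriv_slice hJw).continuous
  have hJvc := (contDiff_deriv_slice hJv).continuous
  rw [integral_congr_ae (.of_forall fun x => mul_inner_gradient_sub_bracket_eq
      ((hρ x).differentiableAt two_ne_zero) ((hv x).differentiableAt two_ne_zero)
      ((hw x).differentiableAt two_ne_zero) (hce_t.self_of_nhds x) (hce_s.self_of_nhds x)),
    integral_add, integral_sub, integral_sub,
    integral_fderiv_apply_deriv_flux_comm (hφ.of_le one_le_two) hφs hR hJw hJv hce_t hce_s,
    integral_divVF_smul_mul_fderiv_apply_sub hφ hφs (hρx.of_le one_le_two)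
      (hvx.of_le one_le_two) (hwx.of_le one_le_two), sub_self, sub_self, add_zero]
  all_goals
    refine Continuous.integrable_of_forall_notMem_tsupport ?_ hφs fun x hx => ?_
    · fun_prop
    · simp [fderiv_of_notMem_tsupport ℝ hx]

end ContinuityEquations

theorem stmt4_general {D : ℕ} (T : ℝ)
    (ρ : ℝ → ℝ → Euc D → ℝ) (v w : ℝ → ℝ → Euc D → Euc D)
    (hρreg : ContDiffOn ℝ 2 (fun p : ℝ × ℝ × Euc D => ρ p.1 p.2.1 p.2.2)
      (Set.Ioo (0:ℝ) 1 ×ˢ Set.Ioo (0:ℝ) T ×ˢ Set.univ))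
    (hvreg : ContDiffOn ℝ 2 (fun p : ℝ × ℝ × Euc D => v p.1 p.2.1 p.2.2)
      (Set.Ioo (0:ℝ) 1 ×ˢ Set.Ioo (0:ℝ) T ×ˢ Set.univ))
    (hwreg : ContDiffOn ℝ 2 (fun p : ℝ × ℝ × Euc D => w p.1 p.2.1 p.2.2)
      (Set.Ioo (0:ℝ) 1 ×ˢ Set.Ioo (0:ℝ) T ×ˢ Set.univ))
    (hce_t : ∀ s ∈ Set.Ioo (0:ℝ) 1, ∀ t ∈ Set.Ioo (0:ℝ) T, ∀ x : Euc D,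
      deriv (fun τ => ρ s τ x) t + divVF (fun y => ρ s t y • v s t y) x = 0)
    (hce_s : ∀ s ∈ Set.Ioo (0:ℝ) 1, ∀ t ∈ Set.Ioo (0:ℝ) T, ∀ x : Euc D,
      deriv (fun σ' => ρ σ' t x) s + divVF (fun y => ρ s t y • w s t y) x = 0) :
    ∀ s ∈ Set.Ioo (0:ℝ) 1, ∀ t ∈ Set.Ioo (0:ℝ) T, ∀ φ : Euc D → ℝ, Cinfc φ →
      ∫ x, (ρ s t x *
        ⟪gradient φ x,
          (deriv (fun τ => w s τ x) t - deriv (fun σ' => v σ' t x) s) -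
            (fderiv ℝ (v s t) x (w s t x) - fderiv ℝ (w s t) x (v s t x))⟫) = 0 := by
  intro s hs t ht φ ⟨hφ, hφs⟩
  have hU : IsOpen (Set.Ioo (0:ℝ) 1 ×ˢ Set.Ioo (0:ℝ) T ×ˢ (Set.univ : Set (Euc D))) :=
    isOpen_Ioo.prod (isOpen_Ioo.prod isOpen_univ)
  have hnhds : ∀ x : Euc D, Set.Ioo (0:ℝ) 1 ×ˢ Set.Ioo (0:ℝ) T ×ˢ Set.univ ∈ 𝓝 (s, t, x) :=
    fun x => hU.mem_nhds ⟨hs, ht, trivial⟩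
  exact integral_mul_inner_gradient_sub_bracket_eq_zero
    (hφ.of_le (WithTop.coe_le_coe.2 le_top)) hφs
    (fun x => hρreg.contDiffAt (hnhds x)) (fun x => hvreg.contDiffAt (hnhds x))
    (fun x => hwreg.contDiffAt (hnhds x))
    (eventually_of_mem (isOpen_Ioo.mem_nhds hs) fun σ hσ => hce_t σ hσ t ht)
    (eventually_of_mem (isOpen_Ioo.mem_nhds ht) fun τ hτ => hce_s s hs τ hτ)

/-- If `ρ`, `v`, `w` solve the two continuity equations `∂_tρ + ∇·(ρv) = 0`,
`∂_sρ + ∇·(ρw) = 0`, then `(∂_t w − ∂_s v) − [w,v] ∈ Ker(div_{ρ(s,t,·)L^D})`. -/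
theorem stmt4 {D : ℕ} (T : ℝ) (hT : 0 < T)
    (ρ : ℝ → ℝ → Euc D → ℝ) (v w : ℝ → ℝ → Euc D → Euc D)
    (hρreg : ContDiffOn ℝ 2 (fun p : ℝ × ℝ × Euc D => ρ p.1 p.2.1 p.2.2)
      (Set.Ioo (0:ℝ) 1 ×ˢ Set.Ioo (0:ℝ) T ×ˢ Set.univ))
    (hρpos : ∀ s ∈ Set.Ioo (0:ℝ) 1, ∀ t ∈ Set.Ioo (0:ℝ) T, ∀ x : Euc D, 0 < ρ s t x)
    (hρprob : ∀ s ∈ Set.Ioo (0:ℝ) 1, ∀ t ∈ Set.Ioo (0:ℝ) T, ∫ x, ρ s t x = 1)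
    (hvreg : ContDiffOn ℝ 2 (fun p : ℝ × ℝ × Euc D => v p.1 p.2.1 p.2.2)
      (Set.Ioo (0:ℝ) 1 ×ˢ Set.Ioo (0:ℝ) T ×ˢ Set.univ))
    (hwreg : ContDiffOn ℝ 2 (fun p : ℝ × ℝ × Euc D => w p.1 p.2.1 p.2.2)
      (Set.Ioo (0:ℝ) 1 ×ˢ Set.Ioo (0:ℝ) T ×ˢ Set.univ))
    (hvbdd : ∃ C : ℝ, ∀ s ∈ Set.Ioo (0:ℝ) 1, ∀ t ∈ Set.Ioo (0:ℝ) T, ∀ x : Euc D,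
      ‖v s t x‖ ≤ C ∧ ‖fderiv ℝ (v s t) x‖ ≤ C)
    (hwbdd : ∃ C : ℝ, ∀ s ∈ Set.Ioo (0:ℝ) 1, ∀ t ∈ Set.Ioo (0:ℝ) T, ∀ x : Euc D,
      ‖w s t x‖ ≤ C ∧ ‖fderiv ℝ (w s t) x‖ ≤ C)
    (hce_t : ∀ s ∈ Set.Ioo (0:ℝ) 1, ∀ t ∈ Set.Ioo (0:ℝ) T, ∀ x : Euc D,
      deriv (fun τ => ρ s τ x) t + divVF (fun y => ρ s t y • v s t y) x = 0)
    (hce_s : ∀ s ∈ Set.Ioo (0:ℝ) 1, ∀ t ∈ Set.Ioo (0:ℝ) T, ∀ x : Euc D,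
      deriv (fun σ' => ρ σ' t x) s + divVF (fun y => ρ s t y • w s t y) x = 0) :
    ∀ s ∈ Set.Ioo (0:ℝ) 1, ∀ t ∈ Set.Ioo (0:ℝ) T, ∀ φ : Euc D → ℝ, Cinfc φ →
      ∫ x, (ρ s t x *
        ⟪gradient φ x,
          (deriv (fun τ => w s τ x) t - deriv (fun σ' => v σ' t x) s) -
            (fderiv ℝ (v s t) x (w s t x) - fderiv ℝ (w s t) x (v s t x))⟫) = 0 :=
  stmt4_general T ρ v w hρreg hvreg hwreg hce_t hce_s

end
end

section
/- Let Λ̄ be a regular pseudo 1-form on M with Riesz representatives Ā_μ. Let μ ∈ M, let {μ_ε} ⊂ M converge to μ in W₂ as ε → 0, let v_ε ∈ L²(μ_ε) with C := sup_ε ‖v_ε‖_{μ_ε} < ∞, and let v ∈ L²(μ) be such that ∫⟨φ, v_ε⟩dμ_ε → ∫⟨φ, v⟩dμ for every φ ∈ C_c(ℝ^D;ℝ^D). Then for any choice of optimal couplings γ_ε ∈ Γ_o(μ, μ_ε), the quantity a_ε := ∬ ⟨Ā_μ(x), v_ε(y) − v(x)⟩ dγ_ε(x,y) tends to 0 as ε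 → 0. -/
open MeasureTheory Filter Set
open scoped RealInnerProductSpace Topology

noncomputable section

variable {D : ℕ}

/-! Approximate `Ā_μ` in `L²(μ)` within `η` by a compactly supported continuous field `φ` and
split `a_ε = ∬⟨Ā_μ(x) - φ(x), v_ε(y)⟩ + ∬⟨φ(x) - φ(y), v_ε(y)⟩ + (∫⟨φ, v_ε⟩dμ_ε - ∫⟨φ, v⟩dμ)
  - ∫⟨Ā_μ - φ, v⟩dμ`.
By Cauchy–Schwarz and `‖v_ε‖ ≤ C`, the first and last terms are `O(η)` uniformly in `ε` and the
second is at most `C ‖φ(x) - φ(y)‖_{L²(γ_ε)}`; the third tends to `0` by the weak convergence.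
Since `φ` is bounded and uniformly continuous, `|φ(x) - φ(y)|² ≤ δ + L_δ |x - y|²` for every
`δ > 0`, so `‖φ(x) - φ(y)‖²_{L²(γ_ε)} ≤ δ + L_δ W₂²(μ, μ_ε)`, which tends to `δ`. -/

namespace MeasureTheory.MemLp

variable {α E : Type*} [MeasurableSpace α] {γ : Measure α}
  [NormedAddCommGroup E] [InnerProductSpace ℝ E] {f g : α → E}

lemma integrable_inner (hf : MemLp f 2 γ) (hg : MemLp g 2 γ) :
    Integrable (fun x => ⟪f x, g x⟫) γ :=
  (L2.integrable_inner (hf.toLp f) (hg.toLp g)).congr <| by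
    filter_upwards [hf.coeFn_toLp, hg.coeFn_toLp] with x hfx hgx
    rw [hfx, hgx]

lemma integral_sq_norm_eq (hf : MemLp f 2 γ) :
    ∫ x, ‖f x‖ ^ 2 ∂γ = ‖hf.toLp f‖ ^ 2 := by
  rw [← real_inner_self_eq_norm_sq, L2.inner_def]
  refine integral_congr_ae ?_
  filter_upwards [hf.coeFn_toLp] with x hfx
  rw [hfx, real_inner_self_eq_norm_sq]

lemma abs_integral_inner_le (hf : MemLp f 2 γ) (hg : MemLp g 2 γ) :
    |∫ x, ⟪f x, g x⟫ ∂γ| ≤ √(∫ x, ‖f x‖ ^ 2 ∂γ) * √(∫ x, ‖g x‖ ^ 2 ∂γ) := by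
  have hinner : ∫ x, ⟪f x, g x⟫ ∂γ = ⟪hf.toLp f, hg.toLp g⟫ := by
    rw [L2.inner_def]
    refine integral_congr_ae ?_
    filter_upwards [hf.coeFn_toLp, hg.coeFn_toLp] with x hfx hgx
    rw [hfx, hgx]
  rw [hinner, hf.integral_sq_norm_eq, hg.integral_sq_norm_eq,
    Real.sqrt_sq (norm_nonneg _), Real.sqrt_sq (norm_nonneg _)]
  exact abs_real_inner_le_norm _ _

end MeasureTheory.MemLp

variable {D : ℕ}

lemma MemL2.memLp {μ : Measure (Euc D)} {X : Euc D → Euc D} (hX : MemL2 μ X) : MemLp X 2 μ :=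
  (memLp_two_iff_integrable_sq_norm hX.1).2 hX.2

lemma L2norm_nonneg (μ : Measure (Euc D)) (X : Euc D → Euc D) : 0 ≤ L2norm μ X :=
  Real.sqrt_nonneg _

lemma MeasureTheory.MemLp.exists_hasCompactSupport_L2norm_sub_le {μ : Measure (Euc D)}
    [IsFiniteMeasure μ] {X : Euc D → Euc D} (hX : MemLp X 2 μ) {η : ℝ} (hη : 0 < η) :
    ∃ φ : Euc D → Euc D, HasCompactSupport φ ∧ Continuous φ ∧
      L2norm μ (fun x => X x - φ x) ≤ η := by
  have hX' : MemLp X (ENNReal.ofReal 2) μ := by simpa using hX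
  obtain ⟨φ, hφc, hφX, hφ, -⟩ :=
    hX'.exists_hasCompactSupport_integral_rpow_sub_le two_pos (pow_pos hη 2)
  refine ⟨φ, hφc, hφ, ?_⟩
  simp only [Real.rpow_two] at hφX
  exact (Real.sqrt_le_sqrt hφX).trans_eq (Real.sqrt_sq hη.le)

namespace IsCoupling

variable {μ ν : Measure (Euc D)} {γ : Measure (Euc D × Euc D)}

lemma memLp_comp_fst (hγ : IsCoupling μ ν γ) {f : Euc D → Euc D} (hf : MemLp f 2 μ) :
    MemLp (fun p : Euc D × Euc D => f p.1) 2 γ :=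
  hf.comp_measurePreserving ⟨measurable_fst, hγ.2.1⟩

lemma memLp_comp_snd (hγ : IsCoupling μ ν γ) {f : Euc D → Euc D} (hf : MemLp f 2 ν) :
    MemLp (fun p : Euc D × Euc D => f p.2) 2 γ :=
  hf.comp_measurePreserving ⟨measurable_snd, hγ.2.2⟩

lemma integral_comp_fst_s11 (hγ : IsCoupling μ ν γ) {f : Euc D → ℝ}
    (hf : AEStronglyMeasurable f μ) : ∫ p, f p.1 ∂γ = ∫ x, f x ∂μ := by
  rw [← hγ.2.1] at hf ⊢
  exact (integral_map measurable_fst.aemeasurable hf).symm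

lemma integral_comp_snd_s11 (hγ : IsCoupling μ ν γ) {f : Euc D → ℝ}
    (hf : AEStronglyMeasurable f ν) : ∫ p, f p.2 ∂γ = ∫ x, f x ∂ν := by
  rw [← hγ.2.2] at hf ⊢
  exact (integral_map measurable_snd.aemeasurable hf).symm

lemma sqrt_integral_sq_norm_comp_fst (hγ : IsCoupling μ ν γ) {f : Euc D → Euc D}
    (hf : AEStronglyMeasurable f μ) : √(∫ p, ‖f p.1‖ ^ 2 ∂γ) = L2norm μ f :=
  congrArg Real.sqrt (hγ.integral_comp_fst_s11 (hf.norm.pow 2))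

lemma sqrt_integral_sq_norm_comp_snd (hγ : IsCoupling μ ν γ) {f : Euc D → Euc D}
    (hf : AEStronglyMeasurable f ν) : √(∫ p, ‖f p.2‖ ^ 2 ∂γ) = L2norm ν f :=
  congrArg Real.sqrt (hγ.integral_comp_snd_s11 (hf.norm.pow 2))

lemma integrable_cost (hγ : IsCoupling μ ν γ) (hμ : InM μ) (hν : InM ν) :
    Integrable (fun p : Euc D × Euc D => ‖p.1 - p.2‖ ^ 2) γ := by
  have h1 := (integrable_map_measure (by fun_prop) measurable_fst.aemeasurable).1
    (hγ.2.1 ▸ hμ.2)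
  have h2 := (integrable_map_measure (by fun_prop) measurable_snd.aemeasurable).1
    (hγ.2.2 ▸ hν.2)
  refine ((h1.const_mul 2).add (h2.const_mul 2)).mono' (by fun_prop)
    (Eventually.of_forall fun p => ?_)
  rw [Real.norm_of_nonneg (by positivity)]
  have := norm_sub_le p.1 p.2
  simp only [Function.comp_apply, Pi.add_apply]
  nlinarith [norm_nonneg (p.1 - p.2), sq_nonneg (‖p.1‖ - ‖p.2‖)]

end IsCoupling

lemma IsOptCoupling.wcost_eq {μ ν : Measure (Euc D)} {γ : Measure (Euc D × Euc D)}
    (hγ : IsOptCoupling μ ν γ) : Wcost γ = W2 μ ν ^ 2 := by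
  have hnonneg : 0 ≤ W2sq μ ν := Real.sInf_nonneg <| by
    rintro _ ⟨γ', -, rfl⟩
    exact integral_nonneg fun p => by positivity
  rw [hγ.2, W2, Real.sq_sqrt hnonneg]

lemma tendsto_nhds_zero_of_forall_abs_le_mul_add {ι : Type*} {l : Filter ι} {a : ι → ℝ} (K : ℝ)
    (h : ∀ η > 0, ∃ r : ι → ℝ, Tendsto r l (𝓝 0) ∧ ∀ᶠ i in l, |a i| ≤ η * K + r i) :
    Tendsto a l (𝓝 0) := by
  refine Metric.tendsto_nhds.2 fun ε hε => ?_
  obtain ⟨r, hr, hbound⟩ := h (ε / 2 / (|K| + 1)) (by positivity)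
  have hηK : ε / 2 / (|K| + 1) * K ≤ ε / 2 := by
    calc ε / 2 / (|K| + 1) * K ≤ ε / 2 / (|K| + 1) * (|K| + 1) := by
          gcongr; linarith [le_abs_self K]
      _ = ε / 2 := div_mul_cancel₀ _ (by positivity)
  filter_upwards [hbound, hr.eventually (gt_mem_nhds (half_pos hε))] with i hai hri
  rw [Real.dist_eq, sub_zero]
  linarith

lemma UniformContinuous.exists_dist_sq_le_add_mul {X Y : Type*} [PseudoMetricSpace X]
    [PseudoMetricSpace Y] {φ : X → Y} (hφ : UniformContinuous φ)
    (hb : Bornology.IsBounded (range φ)) {η : ℝ} (hη : 0 < η) :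
    ∃ L, ∀ x y, dist (φ x) (φ y) ^ 2 ≤ η + L * dist x y ^ 2 := by
  obtain ⟨M, hM⟩ := Metric.isBounded_range_iff.1 hb
  obtain ⟨δ, hδ, hφδ⟩ := Metric.uniformContinuous_iff.1 hφ (√η) (Real.sqrt_pos.2 hη)
  refine ⟨M ^ 2 / δ ^ 2, fun x y => ?_⟩
  rcases lt_or_ge (dist x y) δ with hxy | hxy
  · have hclose : dist (φ x) (φ y) ^ 2 < η := (Real.lt_sqrt dist_nonneg).1 (hφδ hxy)
    have : 0 ≤ M ^ 2 / δ ^ 2 * dist x y ^ 2 := by positivity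
    linarith
  · calc dist (φ x) (φ y) ^ 2 ≤ M ^ 2 := pow_le_pow_left₀ dist_nonneg (hM x y) 2
      _ = M ^ 2 / δ ^ 2 * δ ^ 2 := (div_mul_cancel₀ _ (by positivity)).symm
      _ ≤ M ^ 2 / δ ^ 2 * dist x y ^ 2 := by gcongr
      _ ≤ η + M ^ 2 / δ ^ 2 * dist x y ^ 2 := le_add_of_nonneg_left hη.le

lemma integral_sq_norm_sub_comp_le {F : Type*} [NormedAddCommGroup F]
    {γ : Measure (Euc D × Euc D)} [IsProbabilityMeasure γ]
    (hcost : Integrable (fun p : Euc D × Euc D => ‖p.1 - p.2‖ ^ 2) γ)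
    {φ : Euc D → F} (hφ : Continuous φ) {η L : ℝ}
    (hL : ∀ x y, dist (φ x) (φ y) ^ 2 ≤ η + L * dist x y ^ 2) :
    ∫ p, ‖φ p.1 - φ p.2‖ ^ 2 ∂γ ≤ η + L * Wcost γ := by
  have hbound : ∀ p : Euc D × Euc D, ‖φ p.1 - φ p.2‖ ^ 2 ≤ η + L * ‖p.1 - p.2‖ ^ 2 := by
    simpa only [dist_eq_norm] using fun p : Euc D × Euc D => hL p.1 p.2
  have hmaj : Integrable (fun p : Euc D × Euc D => η + L * ‖p.1 - p.2‖ ^ 2) γ :=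
    (integrable_const η).add (hcost.const_mul L)
  calc ∫ p, ‖φ p.1 - φ p.2‖ ^ 2 ∂γ ≤ ∫ p, (η + L * ‖p.1 - p.2‖ ^ 2) ∂γ := by
        refine integral_mono (hmaj.mono' (by fun_prop) (Eventually.of_forall fun p => ?_))
          hmaj hbound
        rw [Real.norm_of_nonneg (by positivity)]
        exact hbound p
    _ = η + L * Wcost γ := by
        rw [integral_add (integrable_const η) (hcost.const_mul L), integral_const_mul]
        simp [Wcost]

lemma tendsto_integral_sq_norm_sub_comp_of_tendsto_W2 {ι F : Type*} [NormedAddCommGroup F]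
    {l : Filter ι} {μ : Measure (Euc D)} (hμ : InM μ) {μe : ι → Measure (Euc D)}
    {γe : ι → Measure (Euc D × Euc D)} (hμe : ∀ᶠ i in l, InM (μe i))
    (hγe : ∀ᶠ i in l, IsOptCoupling μ (μe i) (γe i))
    (hW : Tendsto (fun i => W2 μ (μe i)) l (𝓝 0)) {φ : Euc D → F} (hφ : UniformContinuous φ)
    (hb : Bornology.IsBounded (range φ)) :
    Tendsto (fun i => ∫ p, ‖φ p.1 - φ p.2‖ ^ 2 ∂γe i) l (𝓝 0) := by
  refine tendsto_nhds_zero_of_forall_abs_le_mul_add 1 fun η hη => ?_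
  obtain ⟨L, hL⟩ := hφ.exists_dist_sq_le_add_mul hb hη
  refine ⟨fun i => L * W2 μ (μe i) ^ 2, by simpa using (hW.pow 2).const_mul L, ?_⟩
  filter_upwards [hμe, hγe] with i hμi hγi
  have : IsProbabilityMeasure (γe i) := hγi.1.1
  rw [abs_of_nonneg (integral_nonneg fun p => by positivity), mul_one, ← hγi.wcost_eq]
  exact integral_sq_norm_sub_comp_le (hγi.1.integrable_cost hμ hμi) hφ.continuous hL

section CouplingSplit

variable {μ ν : Measure (Euc D)} {γ : Measure (Euc D × Euc D)} {A v φ w : Euc D → Euc D}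

lemma IsCoupling.integral_inner_sub_eq (hγ : IsCoupling μ ν γ) (hA : MemLp A 2 μ)
    (hv : MemLp v 2 μ) (hφμ : MemLp φ 2 μ) (hφν : MemLp φ 2 ν) (hw : MemLp w 2 ν) :
    ∫ p, ⟪A p.1, w p.2 - v p.1⟫ ∂γ =
      ∫ p, ⟪A p.1 - φ p.1, w p.2⟫ ∂γ + ∫ p, ⟪φ p.1 - φ p.2, w p.2⟫ ∂γ +
        (∫ x, ⟪φ x, w x⟫ ∂ν - ∫ x, ⟪φ x, v x⟫ ∂μ) - ∫ x, ⟪A x - φ x, v x⟫ ∂μ := by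
  have hAφ : MemLp (fun x => A x - φ x) 2 μ := hA.sub hφμ
  have hwγ := hγ.memLp_comp_snd hw
  have i₁ := (hγ.memLp_comp_fst hAφ).integrable_inner hwγ
  have i₂ : Integrable (fun p : Euc D × Euc D => ⟪φ p.1 - φ p.2, w p.2⟫) γ :=
    ((hγ.memLp_comp_fst hφμ).sub (hγ.memLp_comp_snd hφν)).integrable_inner hwγ
  have i₃ := (hγ.memLp_comp_snd hφν).integrable_inner hwγ
  have i₄ := (hγ.memLp_comp_fst hA).integrable_inner (hγ.memLp_comp_fst hv)
  have hsplitγ : ∫ p, ⟪A p.1, w p.2 - v p.1⟫ ∂γ =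
      ∫ p, ⟪A p.1 - φ p.1, w p.2⟫ ∂γ + ∫ p, ⟪φ p.1 - φ p.2, w p.2⟫ ∂γ +
        ∫ p, ⟪φ p.2, w p.2⟫ ∂γ - ∫ p, ⟪A p.1, v p.1⟫ ∂γ :=
    calc ∫ p, ⟪A p.1, w p.2 - v p.1⟫ ∂γ
        = ∫ p, (⟪A p.1 - φ p.1, w p.2⟫ + ⟪φ p.1 - φ p.2, w p.2⟫ + ⟪φ p.2, w p.2⟫
            - ⟪A p.1, v p.1⟫) ∂γ := by
          congr 1 with p
          simp only [inner_sub_left, inner_sub_right]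
          ring
      _ = _ := by
          rw [integral_sub ?_ i₄, integral_add ?_ i₃, integral_add i₁ i₂]
          · exact i₁.add i₂
          · exact (i₁.add i₂).add i₃
  have hsplitμ : ∫ x, ⟪A x, v x⟫ ∂μ = ∫ x, ⟪A x - φ x, v x⟫ ∂μ + ∫ x, ⟪φ x, v x⟫ ∂μ := by
    rw [← integral_add (hAφ.integrable_inner hv) (hφμ.integrable_inner hv)]
    congr 1 with x
    simp only [inner_sub_left]
    ring
  rw [hsplitγ, hγ.integral_comp_snd_s11 (f := fun x => ⟪φ x, w x⟫) (hφν.1.inner hw.1),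
    hγ.integral_comp_fst_s11 (f := fun x => ⟪A x, v x⟫) (hA.1.inner hv.1), hsplitμ]
  ring

lemma IsCoupling.abs_integral_inner_sub_le (hγ : IsCoupling μ ν γ) (hA : MemLp A 2 μ)
    (hv : MemLp v 2 μ) (hφμ : MemLp φ 2 μ) (hφν : MemLp φ 2 ν) (hw : MemLp w 2 ν) :
    |∫ p, ⟪A p.1, w p.2 - v p.1⟫ ∂γ| ≤
      L2norm μ (fun x => A x - φ x) * (L2norm ν w + L2norm μ v) +
        √(∫ p, ‖φ p.1 - φ p.2‖ ^ 2 ∂γ) * L2norm ν w +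
          |∫ x, ⟪φ x, w x⟫ ∂ν - ∫ x, ⟪φ x, v x⟫ ∂μ| := by
  have hAφ : MemLp (fun x => A x - φ x) 2 μ := hA.sub hφμ
  have hwγ := hγ.memLp_comp_snd hw
  have hL2w := hγ.sqrt_integral_sq_norm_comp_snd hw.1
  have h₁ : |∫ p, ⟪A p.1 - φ p.1, w p.2⟫ ∂γ| ≤ L2norm μ (fun x => A x - φ x) * L2norm ν w := by
    simpa only [hγ.sqrt_integral_sq_norm_comp_fst hAφ.1, hL2w] using
      (hγ.memLp_comp_fst hAφ).abs_integral_inner_le hwγ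
  have h₂ : |∫ p, ⟪φ p.1 - φ p.2, w p.2⟫ ∂γ| ≤ √(∫ p, ‖φ p.1 - φ p.2‖ ^ 2 ∂γ) * L2norm ν w := by
    have hφφγ : MemLp (fun p : Euc D × Euc D => φ p.1 - φ p.2) 2 γ :=
      (hγ.memLp_comp_fst hφμ).sub (hγ.memLp_comp_snd hφν)
    simpa only [hL2w] using hφφγ.abs_integral_inner_le hwγ
  have h₃ : |∫ x, ⟪A x - φ x, v x⟫ ∂μ| ≤ L2norm μ (fun x => A x - φ x) * L2norm μ v :=
    hAφ.abs_integral_inner_le hv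
  rw [hγ.integral_inner_sub_eq hA hv hφμ hφν hw, mul_add]
  calc _ ≤ |∫ p, ⟪A p.1 - φ p.1, w p.2⟫ ∂γ| + |∫ p, ⟪φ p.1 - φ p.2, w p.2⟫ ∂γ| +
        |∫ x, ⟪φ x, w x⟫ ∂ν - ∫ x, ⟪φ x, v x⟫ ∂μ| + |∫ x, ⟪A x - φ x, v x⟫ ∂μ| :=
        (abs_sub _ _).trans (by gcongr; exact abs_add_three _ _ _)
    _ ≤ _ := by linarith

end CouplingSplit

/-- If `μ_ε → μ` in `W₂`, `v_ε ∈ L²(μ_ε)` with uniformly bounded norms, and `v_ε μ_ε → vμ`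
weakly-∗, then `a_ε := ∬⟨Ā_μ(x), v_ε(y) − v(x)⟩dγ_ε → 0` for any `γ_ε ∈ Γ_o(μ, μ_ε)`. -/
theorem stmt11 {D : ℕ} (Λ : RegularPseudoForm D)
    (μ : Measure (Euc D)) (hμ : InM μ)
    (μe : ℝ → Measure (Euc D)) (ve : ℝ → Euc D → Euc D) (v : Euc D → Euc D)
    (hμe : ∀ ε ∈ Set.Ioi (0:ℝ), InM (μe ε))
    (hve : ∀ ε ∈ Set.Ioi (0:ℝ), MemL2 (μe ε) (ve ε))
    (hv : MemL2 μ v)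
    (C : ℝ) (hC : ∀ ε ∈ Set.Ioi (0:ℝ), L2norm (μe ε) (ve ε) ≤ C)
    (hW : Tendsto (fun ε => W2 μ (μe ε)) (𝓝[>] 0) (𝓝 0))
    (hweak : ∀ φ : Euc D → Euc D, Continuous φ → HasCompactSupport φ →
      Tendsto (fun ε => ∫ x, ⟪φ x, ve ε x⟫ ∂(μe ε)) (𝓝[>] 0)
        (𝓝 (∫ x, ⟪φ x, v x⟫ ∂μ)))
    (γe : ℝ → Measure (Euc D × Euc D))
    (hγe : ∀ ε ∈ Set.Ioi (0:ℝ), IsOptCoupling μ (μe ε) (γe ε)) :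
    Tendsto (fun ε => ∫ p, ⟪Λ.A μ p.1, ve ε p.2 - v p.1⟫ ∂(γe ε))
      (𝓝[>] 0) (𝓝 0) := by
  have : IsProbabilityMeasure μ := hμ.1
  have hA := (Λ.A_mem μ hμ).memLp
  have hv2 := hv.memLp
  have hpos : ∀ᶠ ε in 𝓝[>] (0 : ℝ), ε ∈ Ioi 0 := self_mem_nhdsWithin
  refine tendsto_nhds_zero_of_forall_abs_le_mul_add (C + L2norm μ v) fun η hη => ?_
  obtain ⟨φ, hφc, hφ, hAφ⟩ := hA.exists_hasCompactSupport_L2norm_sub_le hη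
  have hI := tendsto_integral_sq_norm_sub_comp_of_tendsto_W2 hμ (hpos.mono hμe) (hpos.mono hγe)
    hW (hφc.uniformContinuous_of_continuous hφ) (hφc.isCompact_range hφ).isBounded
  refine ⟨fun ε => √(∫ p, ‖φ p.1 - φ p.2‖ ^ 2 ∂γe ε) * C +
      |∫ x, ⟪φ x, ve ε x⟫ ∂(μe ε) - ∫ x, ⟪φ x, v x⟫ ∂μ|, ?_, ?_⟩
  · simpa using (hI.sqrt.mul_const C).add
      (tendsto_sub_nhds_zero_iff.2 (hweak φ hφ hφc)).abs
  filter_upwards [hpos] with ε hε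
  have : IsProbabilityMeasure (μe ε) := (hμe ε hε).1
  have hwC := hC ε hε
  calc _ ≤ _ := (hγe ε hε).1.abs_integral_inner_sub_le hA hv2
        (hφ.memLp_of_hasCompactSupport hφc) (hφ.memLp_of_hasCompactSupport hφc) (hve ε hε).memLp
    _ ≤ η * (C + L2norm μ v) + √(∫ p, ‖φ p.1 - φ p.2‖ ^ 2 ∂γe ε) * C +
          |∫ x, ⟪φ x, ve ε x⟫ ∂(μe ε) - ∫ x, ⟪φ x, v x⟫ ∂μ| := by
      gcongr
      exact add_nonneg (L2norm_nonneg _ _) (L2norm_nonneg _ _)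
    _ = _ := add_assoc _ _ _
end
end
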